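/- arXiv:1011.5149 — 11 statements merged into one kernel-verified Lean document; each statement's English description precedes it below -/
import Mathlib

section
/- Let k be a field of characteristic p > 0, G a finite p-group, and W a kG-module with finite dimensional submodules V_i for i in an index set I. Then the sum of the V_i is direct if and only if the sum of the fixed-point subspaces V_i^G is direct. -/
/-- The submodule of `G`-fixed points of `W`. -/
def fixedSubmodule (k G W : Type*) [Field k] [Group G] [AddCommGroup W] [Module k W]
    [DistribMulAction G W] [SMulCommClass G k W] : Submodule k W where
  carrier := {x | ∀ g : G, g • x = x}
  add_mem' := by
    intro a b ha hb g
    rw [smul_add, ha g, hb g]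
  zero_mem' := fun g => smul_zero g
  smul_mem' := by
    intro c x hx g
    rw [smul_comm, hx g]

/-- Key lemma: a nonzero `G`-stable submodule of a `kG`-module (`char k = p`, `G` a finite
`p`-group) contains a nonzero `G`-fixed vector. -/
theorem exists_fixed_of_ne_bot
    {p : ℕ} [Fact p.Prime] (k : Type*) [Field k] [CharP k p]
    (G : Type*) [Group G] [Fintype G] (hG : IsPGroup p G)
    (W : Type*) [AddCommGroup W] [Module k W] [DistribMulAction G W] [SMulCommClass G k W]
    (N : Submodule k W) (hstab : ∀ (g : G), ∀ x ∈ N, g • x ∈ N)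
    (v : W) (hv : v ∈ N) (hv0 : v ≠ 0) :
    ∃ x ∈ N, x ≠ 0 ∧ ∀ g : G, g • x = x := by
  letI : Module (ZMod p) W := Module.compHom W (ZMod.castHom dvd_rfl k)
  have hzsmul : ∀ (c : ZMod p) (x : W), c • x = (ZMod.castHom dvd_rfl k c : k) • x :=
    fun _ _ => rfl
  set S := Submodule.span (ZMod p) (Set.range fun g : G => g • v) with hS
  have hSstab : ∀ (g : G), ∀ x ∈ S, g • x ∈ S := by
    intro g x hx
    induction hx using Submodule.span_induction with
    | mem x hx =>
      obtain ⟨g', rfl⟩ := hx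
      exact Submodule.subset_span ⟨g * g', by simp [mul_smul]⟩
    | zero => simp
    | add x y _ _ hx hy => rw [smul_add]; exact S.add_mem hx hy
    | smul c x _ hx => rw [hzsmul, smul_comm, ← hzsmul]; exact S.smul_mem c hx
  have hSN : (S : Set W) ⊆ N := by
    intro x hx
    induction hx using Submodule.span_induction with
    | mem x hx => obtain ⟨g', rfl⟩ := hx; exact hstab g' v hv
    | zero => exact N.zero_mem
    | add x y _ _ hx hy => exact N.add_mem hx hy
    | smul c x _ hx => rw [hzsmul]; exact N.smul_mem _ hx
  have hvS : v ∈ S := Submodule.subset_span ⟨1, one_smul G v⟩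
  haveI : Module.Finite (ZMod p) S := Module.Finite.span_of_finite _ (Set.finite_range _)
  haveI : Finite ↥S := Module.finite_of_finite (ZMod p)
  haveI : Fintype ↥S := Fintype.ofFinite ↥S
  have hcardS : Fintype.card ↥S = p ^ Module.finrank (ZMod p) ↥S := by
    rw [Module.card_eq_pow_finrank (K := ZMod p) (V := ↥S), ZMod.card]
  haveI : Nontrivial ↥S := ⟨⟨v, hvS⟩, 0, by simpa [Subtype.ext_iff] using hv0⟩
  have hdvd : p ∣ Nat.card ↥S := by
    rw [Nat.card_eq_fintype_card, hcardS]
    refine dvd_pow_self p ?_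
    intro h
    rw [h, pow_zero] at hcardS
    have := Fintype.one_lt_card (α := ↥S)
    omega
  letI : SMul G ↥S := ⟨fun g x => ⟨g • x.1, hSstab g x.1 x.2⟩⟩
  have smul_def : ∀ (g : G) (x : ↥S), (g • x).1 = g • x.1 := fun _ _ => rfl
  letI : MulAction G ↥S :=
    { one_smul := fun x => Subtype.ext (by rw [smul_def, one_smul])
      mul_smul := fun g h x => Subtype.ext (by simp only [smul_def, mul_smul]) }
  have hzero_fixed : (0 : ↥S) ∈ MulAction.fixedPoints G ↥S := by
    intro g
    exact Subtype.ext (by rw [smul_def]; exact smul_zero g)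
  have hmod := hG.card_modEq_card_fixedPoints ↥S
  have hdvdF : p ∣ Nat.card (MulAction.fixedPoints G ↥S) :=
    Nat.modEq_zero_iff_dvd.mp (hmod.symm.trans (Nat.modEq_zero_iff_dvd.mpr hdvd))
  haveI : Nonempty (MulAction.fixedPoints G ↥S) := ⟨⟨0, hzero_fixed⟩⟩
  have hpos : 0 < Nat.card (MulAction.fixedPoints G ↥S) := Nat.card_pos
  have h2 : 1 < Nat.card (MulAction.fixedPoints G ↥S) := by
    have hp2 := (Fact.out : p.Prime).two_le
    have hle := Nat.le_of_dvd hpos hdvdF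
    omega
  haveI : Nontrivial (MulAction.fixedPoints G ↥S) := Finite.one_lt_card_iff_nontrivial.mp h2
  obtain ⟨y, hy⟩ := exists_ne (⟨⟨0, S.zero_mem⟩, hzero_fixed⟩ : MulAction.fixedPoints G ↥S)
  refine ⟨y.1.1, hSN y.1.2, ?_, ?_⟩
  · intro h0
    exact hy (Subtype.ext (Subtype.ext h0))
  · intro g
    have := y.2 g
    exact congrArg Subtype.val this

/-- For a `kG`-module `W` (char k = p, G a finite p-group) with
finite-dimensional `G`-stable submodules `V i`, the sum of the `V i` is direct iff
the sum of the fixed-point subspaces `V i ⊓ W^G` is direct. -/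
theorem sum_direct_iff_fixed_sum_direct
    {p : ℕ} [Fact p.Prime] (k : Type*) [Field k] [CharP k p]
    (G : Type*) [Group G] [Fintype G] (hG : IsPGroup p G)
    (W : Type*) [AddCommGroup W] [Module k W] [DistribMulAction G W] [SMulCommClass G k W]
    {ι : Type*} (V : ι → Submodule k W)
    (hstab : ∀ i (g : G), ∀ x ∈ V i, g • x ∈ V i)
    (hfd : ∀ i, FiniteDimensional k (V i)) :
    iSupIndep V ↔ iSupIndep (fun i => V i ⊓ fixedSubmodule k G W) := by
  classical
  constructor
  · exact fun h => h.mono (fun i => inf_le_left)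
  · intro hFix
    intro i
    rw [disjoint_iff]
    by_contra hne
    obtain ⟨v, hvN, hv0⟩ := Submodule.exists_mem_ne_zero_of_ne_bot hne
    have hvi : v ∈ V i := hvN.1
    obtain ⟨f, hf, hfsum⟩ := (Submodule.mem_iSup_iff_exists_finsupp _ _).mp hvN.2
    have hfi : f i = 0 := by
      have := hf i
      rw [iSup_neg (by simp)] at this
      simpa using this
    have hfj : ∀ j, j ≠ i → f j ∈ V j := by
      intro j hj
      have := hf j
      rwa [iSup_pos hj] at this
    set T : Finset ι := insert i f.support with hT
    have hiT : i ∉ f.support := Finsupp.notMem_support_iff.mpr hfi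
    -- the relation submodule
    set R : Submodule k (ι → W) :=
      { carrier := {h | (∀ j, h j ∈ V j) ∧ (∀ j, j ∉ T → h j = 0) ∧ ∑ j ∈ T, h j = 0}
        add_mem' := by
          rintro a b ⟨ha1, ha2, ha3⟩ ⟨hb1, hb2, hb3⟩
          refine ⟨fun j => (V j).add_mem (ha1 j) (hb1 j),
            fun j hj => by simp [Pi.add_apply, ha2 j hj, hb2 j hj], ?_⟩
          simp only [Pi.add_apply, Finset.sum_add_distrib, ha3, hb3, add_zero]
        zero_mem' := ⟨fun j => (V j).zero_mem, fun j _ => rfl, by simp⟩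
        smul_mem' := by
          rintro c a ⟨ha1, ha2, ha3⟩
          refine ⟨fun j => (V j).smul_mem c (ha1 j),
            fun j hj => by simp [Pi.smul_apply, ha2 j hj], ?_⟩
          simp only [Pi.smul_apply, ← Finset.smul_sum, ha3, smul_zero] } with hR
    have hRstab : ∀ (g : G), ∀ h ∈ R, g • h ∈ R := by
      rintro g h ⟨h1, h2, h3⟩
      refine ⟨fun j => hstab j g _ (h1 j),
        fun j hj => by simp [Pi.smul_apply, h2 j hj], ?_⟩
      have : ∑ j ∈ T, (g • h) j = g • ∑ j ∈ T, h j := by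
        rw [Finset.smul_sum]; rfl
      rw [this, h3, smul_zero]
    set h0 : ι → W := fun j => if j = i then -v else f j with hh0
    have h0mem : h0 ∈ R := by
      refine ⟨?_, ?_, ?_⟩
      · intro j
        by_cases hj : j = i
        · subst hj; simp only [hh0, if_pos rfl]; exact (V j).neg_mem hvi
        · simp only [hh0, if_neg hj]
          by_cases hjs : j ∈ f.support
          · exact hfj j hj
          · rw [Finsupp.notMem_support_iff.mp hjs]; exact (V j).zero_mem
      · intro j hj
        have hji : j ≠ i := fun e => hj (e ▸ Finset.mem_insert_self i f.support)
        have hjs : j ∉ f.support := fun e => hj (Finset.mem_insert_of_mem e)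
        simp only [hh0, if_neg hji]
        exact Finsupp.notMem_support_iff.mp hjs
      · rw [hT, Finset.sum_insert hiT]
        have : ∑ j ∈ f.support, h0 j = ∑ j ∈ f.support, f j := by
          refine Finset.sum_congr rfl fun j hj => ?_
          have hji : j ≠ i := fun e => hiT (e ▸ hj)
          simp [hh0, if_neg hji]
        rw [this, show h0 i = -v by simp [hh0]]
        have : ∑ j ∈ f.support, f j = v := hfsum
        rw [this, neg_add_cancel]
    have h0ne : h0 ≠ 0 := by
      intro h
      apply hv0
      have := congrFun h i
      simp only [hh0, if_pos rfl, Pi.zero_apply, neg_eq_zero] at this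
      exact this
    obtain ⟨h', hR', hne', hfix'⟩ :=
      exists_fixed_of_ne_bot k G hG (ι → W) R hRstab h0 h0mem h0ne
    have hfixmem : ∀ j, h' j ∈ V j ⊓ fixedSubmodule k G W := by
      intro j
      refine ⟨hR'.1 j, fun g => ?_⟩
      have := congrFun (hfix' g) j
      simpa using this
    obtain ⟨j0, hj0⟩ := Function.ne_iff.mp hne'
    have hj0T : j0 ∈ T := by
      by_contra hc
      exact hj0 (hR'.2.1 j0 hc)
    have hsum0 : h' j0 + ∑ j ∈ T.erase j0, h' j = 0 := by
      rw [Finset.add_sum_erase T h' hj0T]; exact hR'.2.2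
    have hmem_sup : ∑ j ∈ T.erase j0, h' j ∈
        ⨆ l, ⨆ _ : l ≠ j0, (V l ⊓ fixedSubmodule k G W) := by
      refine Submodule.sum_mem _ fun l hl => ?_
      exact Submodule.mem_iSup_of_mem l
        (Submodule.mem_iSup_of_mem (Finset.ne_of_mem_erase hl) (hfixmem l))
    have : h' j0 = 0 := by
      refine Submodule.disjoint_def.mp (hFix j0) _ (hfixmem j0) ?_
      have : h' j0 = -∑ j ∈ T.erase j0, h' j := eq_neg_of_add_eq_zero_left hsum0
      rw [this]
      exact Submodule.neg_mem _ hmem_sup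
    exact hj0 this
end

section
/- Let k be a field of characteristic p > 0, G a finite p-group, and V a nonzero finite-dimensional kG-module. If v ∈ V satisfies tr(v) := Σ_{g∈G} v·g ≠ 0, then the kG-submodule generated by the orbit {v·g : g ∈ G} is a free kG-module of rank one. -/
/-!
The kernel of `a ↦ a • v` is a left ideal of `k[G]`, so it suffices that every nonzero left ideal
contains the norm element `N = ∑ g`. A left ideal is an `𝔽_p`-vector space on which `G` acts
additively; the `𝔽_p`-span of one `G`-orbit in it is finite of `p`-power order, so the `p`-group
fixed-point congruence produces a nonzero `G`-fixed element. The `G`-fixed elements of `k[G]` are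
exactly the scalar multiples of `N`.
-/

open MonoidAlgebra MulAction

namespace IsPGroup

variable {p : ℕ} [Fact p.Prime] {G : Type*} [Group G] (hG : IsPGroup p G)
  {M : Type*} [AddCommGroup M] [Module (ZMod p) M] [DistribMulAction G M] [Nontrivial M]
include hG

theorem exists_ne_zero_mem_fixedPoints_of_finite [Finite M] :
    ∃ x ∈ fixedPoints G M, x ≠ 0 := by
  obtain ⟨x, hx⟩ := exists_ne (0 : M)
  have hp : p ∣ Nat.card M :=
    addOrderOf_eq_prime (ZModModule.char_nsmul_eq_zero p x) hx ▸ addOrderOf_dvd_natCard x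
  obtain ⟨y, hy, hy0⟩ :=
    hG.exists_fixed_point_of_prime_dvd_card_of_fixed_point M hp (a := 0) fun g => smul_zero g
  exact ⟨y, hy, hy0.symm⟩

theorem exists_ne_zero_mem_fixedPoints [Finite G] : ∃ x ∈ fixedPoints G M, x ≠ 0 := by
  obtain ⟨x, hx⟩ := exists_ne (0 : M)
  let T := Submodule.span (ZMod p) (orbit G x)
  have hT (g : G) (y : M) (hy : y ∈ T) : g • y ∈ T := by
    let f := (DistribSMul.toAddMonoidHom M g).toZModLinearMap p
    have hf : f '' orbit G x ⊆ orbit G x := by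
      rintro _ ⟨z, hz, rfl⟩
      exact mem_orbit_of_mem_orbit g hz
    exact Submodule.span_mono hf (Submodule.span_image f ▸ Submodule.mem_map_of_mem hy)
  let _ : SMul G T := ⟨fun g y => ⟨g • y, hT g y y.2⟩⟩
  let _ : DistribMulAction G T :=
    Subtype.val_injective.distribMulAction T.subtype.toAddMonoidHom fun _ _ => rfl
  have : Module.Finite (ZMod p) T := .span_of_finite (ZMod p) (Set.finite_range _)
  have : Finite T := Module.finite_of_finite (ZMod p)
  have : Nontrivial T := ⟨⟨x, Submodule.subset_span (mem_orbit_self x)⟩, 0, by simpa using hx⟩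
  obtain ⟨y, hy, hy0⟩ := hG.exists_ne_zero_mem_fixedPoints_of_finite (M := T)
  exact ⟨y, fun g => congrArg Subtype.val (hy g), by simpa using hy0⟩

end IsPGroup

theorem MonoidAlgebra.eq_coeff_one_smul_sum_of_of_mul_eq_self {k G : Type*} [Semiring k]
    [Group G] [Fintype G] {y : MonoidAlgebra k G} (hy : ∀ g : G, of k G g * y = y) :
    y = y.coeff 1 • ∑ g : G, of k G g := by
  have hcoeff (g : G) : y.coeff g = y.coeff 1 := by
    simpa [coeff_single_mul_apply] using (congrArg (fun z => z.coeff g) (hy g)).symm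
  ext g
  simp [Finset.smul_sum, hcoeff g]

theorem IsPGroup.sum_of_mem_of_ne_bot {p : ℕ} [Fact p.Prime] {k G : Type*} [Field k] [CharP k p]
    [Group G] [Fintype G] (hG : IsPGroup p G)
    {I : Submodule (MonoidAlgebra k G) (MonoidAlgebra k G)} (hI : I ≠ ⊥) :
    ∑ g : G, of k G g ∈ I := by
  have : Nontrivial I := Submodule.nontrivial_iff_ne_bot.mpr hI
  let _ : Module (ZMod p) I := Module.compHom I (ZMod.castHom dvd_rfl k)
  let _ : DistribMulAction G I := DistribMulAction.compHom I (of k G)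
  obtain ⟨y, hy, hy0⟩ := hG.exists_ne_zero_mem_fixedPoints (M := I)
  have hyN := eq_coeff_one_smul_sum_of_of_mul_eq_self fun g => congrArg Subtype.val (hy g)
  have hc : (y : MonoidAlgebra k G).coeff 1 ≠ 0 := fun hc =>
    hy0 (Subtype.ext (by rw [hyN, hc, zero_smul]; rfl))
  rw [← inv_smul_smul₀ hc (∑ g, of k G g), ← hyN]
  exact I.smul_of_tower_mem _ y.2

theorem span_orbit_free_of_trace_ne_zero_general
    {p : ℕ} [Fact p.Prime] (k : Type*) [Field k] [CharP k p]
    (G : Type*) [Group G] [Fintype G] (hG : IsPGroup p G)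
    (V : Type*) [AddCommGroup V] [Module (MonoidAlgebra k G) V]
    (v : V) (htr : ((∑ g : G, MonoidAlgebra.of k G g) : MonoidAlgebra k G) • v ≠ 0) :
    Nonempty ((Submodule.span (MonoidAlgebra k G) ({v} : Set V))
      ≃ₗ[MonoidAlgebra k G] MonoidAlgebra k G) := by
  let f := LinearMap.toSpanSingleton (MonoidAlgebra k G) V v
  have hf : LinearMap.ker f = ⊥ := by
    by_contra h
    exact htr (hG.sum_of_mem_of_ne_bot h)
  rw [LinearMap.span_singleton_eq_range]
  exact ⟨(LinearEquiv.ofInjective f (LinearMap.ker_eq_bot.mp hf)).symm⟩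

/-- If `V` is a nonzero finite-dimensional module over the group algebra `kG`
(`char k = p`, `G` a finite `p`-group) and `v ∈ V` has nonzero transfer
`tr v = (Σ_{g∈G} g) • v ≠ 0`, then the `kG`-submodule generated by the orbit of `v`
is a free `kG`-module of rank one, i.e. isomorphic to `kG` itself. -/
theorem span_orbit_free_of_trace_ne_zero
    {p : ℕ} [Fact p.Prime] (k : Type*) [Field k] [CharP k p]
    (G : Type*) [Group G] [Fintype G] (hG : IsPGroup p G)
    (V : Type*) [AddCommGroup V] [Module k V] [Module (MonoidAlgebra k G) V]
    [IsScalarTower k (MonoidAlgebra k G) V]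
    [FiniteDimensional k V] (hV : Nontrivial V)
    (v : V) (htr : ((∑ g : G, MonoidAlgebra.of k G g) : MonoidAlgebra k G) • v ≠ 0) :
    Nonempty ((Submodule.span (MonoidAlgebra k G) ({v} : Set V))
      ≃ₗ[MonoidAlgebra k G] MonoidAlgebra k G) :=
  span_orbit_free_of_trace_ne_zero_general k G hG V v htr
end

section
/- Let k be a field of characteristic p > 0, G a finite p-group acting on a commutative k-algebra A by k-algebra automorphisms. Then the following are equivalent: (i) 1 = tr(a) for some a ∈ A; (ii) A^G = tr(A); (iii) A is free as a kG-module. -/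
/-!
Since `tr` is `A^G`-linear, `tr (b * a) = b * tr a` for invariant `b`, which gives (i) ⇔ (ii).

The invariants of `kG` are the multiples of the norm element `N = ∑ g`, so in a free
`kG`-module every invariant vector lies in `N • M`; for `M = A` and the invariant `1` this says
`1 = tr a`.

Conversely, if `tr a = 1` then the `G`-conjugates of multiplication by `a` sum to the identity,
so `A` is a direct summand of the induced module `kG ⊗ A` and hence projective (Higman's
criterion). As `G` is a `p`-group and `char k = p`, every nonzero `kG`-module has a nonzero
fixed vector, which makes the augmentation ideal `J` nilpotent. Nakayama's lemma for the nilpotent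
ideal `J` then shows that lifting a `k`-basis of `M ⧸ J • M` gives a `kG`-basis of any projective
`kG`-module `M`.
-/

open MonoidAlgebra TensorProduct

theorem Submodule.le_of_le_sup_smul_of_pow_eq_bot {R M : Type*} [Semiring R] [AddCommMonoid M]
    [Module R M] {I : Ideal R} {n : ℕ} (hI : I ^ n = ⊥) {N P : Submodule R M}
    (h : P ≤ N ⊔ I • P) : P ≤ N := by
  have key : ∀ m, P ≤ N ⊔ I ^ m • P := by
    intro m
    induction m with
    | zero => rw [Submodule.pow_zero, Ideal.one_eq_top, Submodule.top_smul]; exact le_sup_right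
    | succ m ih =>
      calc P ≤ N ⊔ I ^ m • P := ih
        _ ≤ N ⊔ I ^ m • (N ⊔ I • P) := sup_le_sup_left (Submodule.smul_mono le_rfl h) _
        _ ≤ N ⊔ I ^ (m + 1) • P := by
          rw [Submodule.smul_sup, Submodule.pow_succ, Submodule.mul_smul]
          exact sup_le le_sup_left (sup_le (Submodule.smul_le_right.trans le_sup_left) le_sup_right)
  simpa [hI] using key n

theorem LinearMap.mem_smul_ker_of_forall_mem_of_comp_eq_id {ι R M : Type*} [Ring R]
    [AddCommGroup M] [Module R M] {Φ : (ι →₀ R) →ₗ[R] M} {s : M →ₗ[R] ι →₀ R}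
    (hs : Φ ∘ₗ s = LinearMap.id) {I : Ideal R} {y : ι →₀ R} (hy : Φ y = 0) (hI : ∀ i, y i ∈ I) :
    y ∈ I • LinearMap.ker Φ := by
  let π := LinearMap.id - s ∘ₗ Φ
  have hπ (z) : π z ∈ LinearMap.ker Φ := by
    simp [π, ← LinearMap.comp_apply Φ s, hs]
  have hyπ : y = y.sum fun i r => r • π (Finsupp.single i 1) :=
    calc y = π y := by simp [π, hy]
      _ = _ := by
        conv_lhs => rw [← Finsupp.sum_single y]
        rw [map_finsuppSum]
        exact Finsupp.sum_congr fun i _ => by rw [← map_smul, Finsupp.smul_single_one]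
  rw [hyπ]
  exact Submodule.sum_mem _ fun i _ => Submodule.smul_mem_smul (hI i) (hπ _)

theorem Module.free_of_projective_of_ker_pow_eq_bot {k R M : Type*} [Field k] [Ring R]
    [Algebra k R] (ε : R →ₐ[k] k) {n : ℕ} (hε : RingHom.ker ε ^ n = ⊥) [AddCommGroup M]
    [Module R M] [Module k M] [IsScalarTower k R M] [Module.Projective R M] :
    Module.Free R M := by
  set I := RingHom.ker ε
  let mk := (I • ⊤ : Submodule R M).mkQ
  have mk_smul (r : R) (m : M) : mk (r • m) = ε r • mk m := by
    rw [← algebraMap_smul R (ε r) (mk m), ← map_smul, ← sub_eq_zero, ← map_sub, ← sub_smul,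
      Submodule.mkQ_apply, Submodule.Quotient.mk_eq_zero]
    exact Submodule.smul_mem_smul (by simp [I]) trivial
  let b := Module.Basis.ofVectorSpace k (M ⧸ (I • ⊤ : Submodule R M))
  choose v hv using fun i => Submodule.mkQ_surjective (I • ⊤ : Submodule R M) (b i)
  let Φ := Finsupp.linearCombination R v
  have mk_Φ (y) : mk (Φ y) = Finsupp.linearCombination k b (y.mapRange ε (map_zero ε)) := by
    rw [Finsupp.linearCombination_apply, map_finsuppSum, Finsupp.linearCombination_apply,
      Finsupp.sum_mapRange_index fun i => zero_smul k (b i)]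
    exact Finsupp.sum_congr fun i _ => by rw [mk_smul, hv]
  have hsurj : Function.Surjective Φ := by
    rw [← LinearMap.range_eq_top, eq_top_iff]
    refine Submodule.le_of_le_sup_smul_of_pow_eq_bot hε fun m _ => ?_
    let y := (b.repr (mk m)).mapRange (algebraMap k R) (map_zero _)
    have hy : mk (Φ y) = mk m := by
      rw [mk_Φ]
      convert b.linearCombination_repr (mk m) using 2
      ext i
      simp [y]
    refine Submodule.mem_sup.2 ⟨Φ y, ⟨y, rfl⟩, m - Φ y, ?_, add_sub_cancel _ _⟩
    rwa [← Submodule.Quotient.mk_eq_zero, Submodule.Quotient.mk_sub, sub_eq_zero, eq_comm]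
  obtain ⟨s, hs⟩ := Module.projective_lifting_property Φ LinearMap.id hsurj
  have hinj : Function.Injective Φ := by
    rw [← LinearMap.ker_eq_bot, eq_bot_iff]
    refine Submodule.le_of_le_sup_smul_of_pow_eq_bot hε fun y hy => ?_
    rw [bot_sup_eq]
    refine LinearMap.mem_smul_ker_of_forall_mem_of_comp_eq_id hs hy fun i => ?_
    have h0 := mk_Φ y
    rw [LinearMap.mem_ker.1 hy, map_zero, eq_comm] at h0
    simpa [I] using DFunLike.congr_fun (linearIndependent_iff.1 b.linearIndependent _ h0) i
  exact Module.Free.of_equiv (LinearEquiv.ofBijective Φ ⟨hinj, hsurj⟩)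

theorem IsPGroup.exists_ne_zero_forall_smul_eq {p : ℕ} [Fact p.Prime] {G : Type*} [Group G]
    [Finite G] (hG : IsPGroup p G) {V : Type*} [AddCommGroup V] [Module (ZMod p) V]
    [DistribMulAction G V] {v₀ : V} (hv₀ : v₀ ≠ 0) : ∃ v : V, v ≠ 0 ∧ ∀ g : G, g • v = v := by
  let S := Submodule.span (ZMod p) (Set.range fun g : G => g • v₀)
  have hv₀S : v₀ ∈ S := Submodule.subset_span ⟨1, one_smul G v₀⟩
  let W : SubMulAction G V :=
    { carrier := S
      smul_mem' := fun g => by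
        have : S ≤ S.comap ((DistribSMul.toAddMonoidHom V g).toZModLinearMap p) :=
          Submodule.span_le.2 <| Set.range_subset_iff.2 fun h =>
            Submodule.subset_span ⟨g * h, mul_smul g h v₀⟩
        exact fun x hx => this hx }
  have : Module.Finite (ZMod p) S := Module.Finite.span_of_finite _ (Set.finite_range _)
  have : Finite W := Module.finite_of_finite (ZMod p) (M := S)
  have hcard : p ∣ Nat.card W := by
    change p ∣ Nat.card S
    have := addOrderOf_dvd_natCard (⟨v₀, hv₀S⟩ : S)
    rwa [addOrderOf_eq_prime (ZModModule.char_nsmul_eq_zero p _) (by simpa using hv₀)] at this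
  obtain ⟨w, hw, hw0⟩ := hG.exists_fixed_point_of_prime_dvd_card_of_fixed_point W hcard
    (a := ⟨0, S.zero_mem⟩) fun g => Subtype.ext (smul_zero g)
  exact ⟨w, fun h => hw0 (Subtype.ext h.symm), fun g => congrArg Subtype.val (hw g)⟩

namespace MonoidAlgebra

variable (k G : Type*) [CommRing k] [Monoid G]

noncomputable def augmentation : MonoidAlgebra k G →ₐ[k] k := lift k k G 1

noncomputable def augmentationIdeal : Ideal (MonoidAlgebra k G) := RingHom.ker (augmentation k G)

variable {k G}

theorem augmentation_of (g : G) : augmentation k G (of k G g) = 1 := by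
  simp [augmentation]

instance : (augmentationIdeal k G).IsTwoSided := by unfold augmentationIdeal; infer_instance

theorem augmentationIdeal_eq_span :
    augmentationIdeal k G = Ideal.span (Set.range fun g => of k G g - 1) := by
  set S := Ideal.span (Set.range fun g => of k G g - 1)
  refine le_antisymm (fun r hr => ?_) <| Ideal.span_le.2 <| Set.range_subset_iff.2 fun g => by
    rw [SetLike.mem_coe, augmentationIdeal, RingHom.mem_ker, map_sub, map_one, augmentation_of,
      sub_self]
  suffices ∀ r, r - algebraMap k _ (augmentation k G r) ∈ S by
    simpa [show augmentation k G r = 0 from hr] using this r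
  intro r
  induction r using MonoidAlgebra.induction_on with
  | of g => rw [augmentation_of, map_one]; exact Ideal.subset_span ⟨g, rfl⟩
  | add r s hr hs => simpa only [map_add, add_sub_add_comm] using add_mem hr hs
  | smul c r hr =>
    simpa only [Algebra.smul_def, map_mul, AlgHom.commutes, Algebra.algebraMap_self,
      RingHom.id_apply, mul_sub] using Ideal.mul_mem_left _ (algebraMap k _ c) hr

theorem exists_not_mem_augmentationIdeal_smul_span_le {p : ℕ} [Fact p.Prime] {k G M : Type*}
    [CommRing k] [CharP k p] [Group G] [Finite G] (hG : IsPGroup p G) [AddCommGroup M]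
    [Module (MonoidAlgebra k G) M] {N : Submodule (MonoidAlgebra k G) M} (hN : N ≠ ⊤) :
    ∃ x ∉ N, augmentationIdeal k G • (MonoidAlgebra k G ∙ x) ≤ N := by
  obtain ⟨x₀, -, hx₀⟩ := SetLike.exists_of_lt hN.lt_top
  let _ : DistribMulAction G (M ⧸ N) := DistribMulAction.compHom _ (of k G)
  let _ : Module (ZMod p) (M ⧸ N) := AddCommGroup.zmodModule fun q => by
    rw [← Nat.cast_smul_eq_nsmul (MonoidAlgebra k G), ← map_natCast (algebraMap k _),
      CharP.cast_eq_zero, map_zero, zero_smul]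
  obtain ⟨q, hq, hfix⟩ := hG.exists_ne_zero_forall_smul_eq
    (v₀ := Submodule.Quotient.mk (p := N) x₀) (by simpa using hx₀)
  obtain ⟨x, rfl⟩ := Submodule.Quotient.mk_surjective N q
  refine ⟨x, by simpa using hq, ?_⟩
  suffices augmentationIdeal k G ≤ N.comap (LinearMap.toSpanSingleton _ M x) by
    intro z hz
    obtain ⟨r, hr, rfl⟩ := Submodule.mem_smul_span_singleton.1 hz
    exact this hr
  rw [augmentationIdeal_eq_span, Ideal.span_le]
  rintro _ ⟨g, rfl⟩
  rw [SetLike.mem_coe, Submodule.mem_comap, LinearMap.toSpanSingleton_apply, sub_smul, one_smul,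
    ← Submodule.Quotient.mk_eq_zero, Submodule.Quotient.mk_sub, Submodule.Quotient.mk_smul]
  exact sub_eq_zero.2 (hfix g)

section Nilpotent

variable {p : ℕ} [Fact p.Prime] {k G : Type*} [Field k] [CharP k p] [Group G] [Finite G]
  {M : Type*} [AddCommGroup M] [Module (MonoidAlgebra k G) M]

theorem augmentationIdeal_pow_finrank_smul_top_eq_bot (hG : IsPGroup p G) [Module k M]
    [IsScalarTower k (MonoidAlgebra k G) M] [Module.Finite k M] :
    augmentationIdeal k G ^ Module.finrank k M • (⊤ : Submodule (MonoidAlgebra k G) M) = ⊥ := by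
  suffices h : ∀ n, ∀ N : Submodule (MonoidAlgebra k G) M,
      Module.finrank k M ≤ Module.finrank k (N.restrictScalars k) + n →
        augmentationIdeal k G ^ n • ⊤ ≤ N from
    eq_bot_iff.2 (h _ ⊥ le_add_self)
  intro n
  induction n with
  | zero =>
    intro N hN
    have : N.restrictScalars k = ⊤ :=
      Submodule.eq_top_of_finrank_eq (le_antisymm (Submodule.finrank_le _) hN)
    rw [Submodule.pow_zero, Ideal.one_eq_top, Submodule.top_smul, top_le_iff,
      ← Submodule.restrictScalars_eq_top_iff k, this]
  | succ n ih =>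
    intro N hN
    rcases eq_or_ne N ⊤ with rfl | hNtop
    · exact le_top
    obtain ⟨x, hxN, hx⟩ := exists_not_mem_augmentationIdeal_smul_span_le hG hNtop
    have hlt : N < N ⊔ (MonoidAlgebra k G ∙ x) :=
      left_lt_sup.2 fun h => hxN (h (Submodule.mem_span_singleton_self x))
    have hrank := Submodule.finrank_lt_finrank_of_lt
      ((Submodule.restrictScalars_lt k).2 hlt)
    calc augmentationIdeal k G ^ (n + 1) • ⊤
        = augmentationIdeal k G • augmentationIdeal k G ^ n • ⊤ := by
          rw [Ideal.IsTwoSided.pow_succ, Submodule.mul_smul]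
      _ ≤ augmentationIdeal k G • (N ⊔ (MonoidAlgebra k G ∙ x)) :=
          Submodule.smul_mono le_rfl (ih _ (by omega))
      _ ≤ N := by
          rw [Submodule.smul_sup]
          exact sup_le Submodule.smul_le_right hx

theorem augmentationIdeal_pow_card_eq_bot (hG : IsPGroup p G) :
    augmentationIdeal k G ^ Nat.card G = ⊥ := by
  have := Fintype.ofFinite G
  have := augmentationIdeal_pow_finrank_smul_top_eq_bot (k := k) (M := MonoidAlgebra k G) hG
  rwa [Ideal.smul_eq_mul, Ideal.mul_top, (coeffLinearEquiv k).finrank_eq,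
    Module.finrank_finsupp_self, ← Nat.card_eq_fintype_card] at this

end Nilpotent

section Invariants

variable {k G : Type*} [CommSemiring k] [Group G] [Fintype G]

theorem eq_coeff_one_smul_sum_of_forall_of_mul_eq {u : MonoidAlgebra k G}
    (hu : ∀ g, of k G g * u = u) : u = u.coeff 1 • ∑ g, of k G g := by
  ext h
  have := congrArg (fun v : MonoidAlgebra k G => v.coeff h) (hu h)
  simp only [of_apply, coeff_single_mul_apply, inv_mul_cancel, one_mul] at this
  simp [coeff_sum, ← this]

theorem exists_sum_of_smul_eq_of_forall_of_smul_eq {M : Type*} [AddCommMonoid M]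
    [Module (MonoidAlgebra k G) M] [Module.Free (MonoidAlgebra k G) M] {x : M}
    (hx : ∀ g, of k G g • x = x) : ∃ m, (∑ g, of k G g) • m = x := by
  let b := Module.Free.chooseBasis (MonoidAlgebra k G) M
  have hc (i) : b.repr x i = (∑ g, of k G g) * algebraMap k _ ((b.repr x i).coeff 1) := by
    rw [← Algebra.commutes, ← Algebra.smul_def]
    refine eq_coeff_one_smul_sum_of_forall_of_mul_eq fun g => ?_
    rw [← smul_eq_mul, ← Finsupp.smul_apply, ← map_smul, hx]
  refine ⟨(b.repr x).sum fun i c => algebraMap k (MonoidAlgebra k G) (c.coeff 1) • b i, ?_⟩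
  conv_rhs => rw [← b.linearCombination_repr x, Finsupp.linearCombination_apply]
  rw [Finsupp.smul_sum]
  exact Finsupp.sum_congr fun i _ => by rw [smul_smul, ← hc]

end Invariants

theorem projective_of_sumOfConjugates_eq_id {k G M : Type*} [CommRing k] [Group G] [Fintype G]
    [AddCommGroup M] [Module k M] [Module.Projective k M] [Module (MonoidAlgebra k G) M]
    [IsScalarTower k (MonoidAlgebra k G) M]
    (φ : M →ₗ[k] M) (hφ : φ.sumOfConjugates G = LinearMap.id) :
    Module.Projective (MonoidAlgebra k G) M := by
  let π : MonoidAlgebra k G ⊗[k] M →ₗ[MonoidAlgebra k G] M :=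
    AlgebraTensorModule.lift (LinearMap.toSpanSingleton _ _ LinearMap.id)
  let σ := ((TensorProduct.mk k (MonoidAlgebra k G) M 1) ∘ₗ φ).sumOfConjugatesEquivariant G
  refine Module.Projective.of_split σ π (LinearMap.ext fun m => ?_)
  conv_rhs => rw [LinearMap.id_apply, ← LinearMap.id_apply (R := k) m, ← hφ]
  simp [π, σ, LinearMap.sumOfConjugatesEquivariant_apply, LinearMap.sumOfConjugates_apply,
    LinearMap.conjugate_apply]

end MonoidAlgebra

theorem Representation.exists_norm_eq_of_free {k G V : Type*} [CommSemiring k] [Group G]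
    [Fintype G] [AddCommMonoid V] [Module k V] (ρ : Representation k G V)
    [Module.Free (MonoidAlgebra k G) ρ.asModule] {v : V} (hv : ∀ g, ρ g v = v) :
    ∃ w, ρ.norm w = v := by
  obtain ⟨m, hm⟩ := exists_sum_of_smul_eq_of_forall_of_smul_eq (k := k) (G := G)
    (x := ρ.asModuleEquiv.symm v)
    fun g => by rw [← Representation.asModuleEquiv_symm_map_rho, hv]
  refine ⟨ρ.asModuleEquiv m, ?_⟩
  rw [← ρ.asModuleEquiv.apply_symm_apply v, ← hm]
  simp [Representation.norm]

theorem Representation.projective_asModule_of_sum_comp_eq_id {k G V : Type*} [CommRing k]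
    [Group G] [Fintype G] [AddCommGroup V] [Module k V] [Module.Projective k V]
    (ρ : Representation k G V) (φ : V →ₗ[k] V) (hφ : ∑ g, ρ g⁻¹ ∘ₗ φ ∘ₗ ρ g = LinearMap.id) :
    Module.Projective (MonoidAlgebra k G) ρ.asModule := by
  have := Module.Projective.of_equiv ρ.asModuleEquiv.symm
  refine projective_of_sumOfConjugates_eq_id (ρ.asModuleEquiv.symm.toLinearMap ∘ₗ φ ∘ₗ
    ρ.asModuleEquiv.toLinearMap) (LinearMap.ext fun x => ?_)
  have hx := congr(ρ.asModuleEquiv.symm ($hφ (ρ.asModuleEquiv x)))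
  simp only [LinearMap.sum_apply, LinearMap.comp_apply, LinearMap.id_apply] at hx
  simp only [LinearMap.sumOfConjugates_apply, LinearMap.conjugate_apply,
    Representation.single_smul, one_smul]
  exact hx

/-- For a commutative `k`-algebra `A` (`char k = p`) with an action of a finite
`p`-group `G` by `k`-algebra automorphisms, the following are equivalent:
(i) `1 = tr a` for some `a ∈ A`; (ii) `A^G = tr(A)`; (iii) `A` is free as a `kG`-module
(phrased via the associated `MonoidAlgebra k G`-module structure). -/
theorem trace_one_tfae
    {p : ℕ} [Fact p.Prime] (k : Type*) [Field k] [CharP k p]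
    (G : Type*) [Group G] [Fintype G] (hG : IsPGroup p G)
    (A : Type*) [CommRing A] [Algebra k A] [MulSemiringAction G A] [SMulCommClass G k A] :
    List.TFAE
      [ (∃ a : A, (∑ g : G, g • a) = 1),
        (∀ b : A, (∀ g : G, g • b = b) → ∃ a : A, (∑ g : G, g • a) = b),
        Module.Free (MonoidAlgebra k G)
          (Representation.ofDistribMulAction k G A).asModule ] := by
  set ρ := Representation.ofDistribMulAction k G A
  tfae_have 1 → 2 := by
    rintro ⟨a, ha⟩ b hb
    exact ⟨b * a, by simp only [smul_mul', hb, ← Finset.mul_sum, ha, mul_one]⟩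
  tfae_have 2 → 1 := fun h => h 1 smul_one
  tfae_have 3 → 1 := fun _ => by
    obtain ⟨a, ha⟩ := ρ.exists_norm_eq_of_free (v := 1) smul_one
    exact ⟨a, by simpa [ρ] using ha⟩
  tfae_have 1 → 3 := by
    rintro ⟨a, ha⟩
    have : Module.Projective (MonoidAlgebra k G) ρ.asModule :=
      ρ.projective_asModule_of_sum_comp_eq_id (LinearMap.mulRight k a) <| by
        have ha' : ∑ g : G, g⁻¹ • a = 1 := ha ▸ Equiv.sum_comp (Equiv.inv G) (· • a)
        ext x
        simp [ρ, smul_mul', ← Finset.mul_sum, ha']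
    exact Module.free_of_projective_of_ker_pow_eq_bot (augmentation k G)
      (augmentationIdeal_pow_card_eq_bot hG)
  tfae_finish
end

section
/- (Artin–Schreier) Let k be a field of characteristic p > 0 and suppose L/k is a Galois field extension with Galois group cyclic of order p. Then there exists γ ∈ k such that L = k(α) where α is a root of the irreducible polynomial X^p − X + γ ∈ k[X]. -/
/-!
Let `σ` generate `Gal(L/k)`. Since `[L : k] = p` vanishes in `k`, `Tr(1) = 0`, so additive
Hilbert 90 (proved by comparing dimensions: `σ - 1` has kernel `k`, and its image lies in the
kernel of the surjective trace) gives `α` with `σ α = α + 1`. Then `σ (α ^ p - α)` equals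
`(α + 1) ^ p - (α + 1) = α ^ p - α`, so `α ^ p - α = c ∈ k`. As `α ∉ k` and `[L : k]` is
prime, `α` generates `L`, so its minimal polynomial has degree `p` and equals `X ^ p - X - c`.
-/

open Polynomial Module

theorem finrank_ker_trace {k L : Type*} [Field k] [Field L] [Algebra k L] [FiniteDimensional k L]
    [Algebra.IsSeparable k L] :
    finrank k (LinearMap.ker (Algebra.trace k L)) = finrank k L - 1 := by
  have h := LinearMap.finrank_range_add_finrank_ker (Algebra.trace k L)
  rw [LinearMap.range_eq_top.mpr (Algebra.trace_surjective k L), finrank_top, finrank_self] at h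
  omega

section CyclicGalois

variable {k L : Type*} [Field k] [Field L] [Algebra k L] [IsGalois k L] [FiniteDimensional k L]
  {σ : L ≃ₐ[k] L}

theorem mem_range_algebraMap_of_apply_eq_self (hσ : Subgroup.zpowers σ = ⊤) {x : L}
    (hx : σ x = x) : x ∈ Set.range (algebraMap k L) := by
  have hstab : Subgroup.zpowers σ ≤ MulAction.stabilizer (L ≃ₐ[k] L) x :=
    Subgroup.zpowers_le.mpr hx
  exact (IsGalois.mem_range_algebraMap_iff_fixed x).mpr fun τ ↦
    hstab (hσ ▸ Subgroup.mem_top τ)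

theorem ker_sub_id_eq_range_algebraMap (hσ : Subgroup.zpowers σ = ⊤) :
    LinearMap.ker (σ.toLinearMap - LinearMap.id) = LinearMap.range (Algebra.linearMap k L) := by
  ext x
  simp only [LinearMap.mem_ker, LinearMap.sub_apply, AlgEquiv.toLinearMap_apply,
    LinearMap.id_apply, sub_eq_zero, LinearMap.mem_range, Algebra.linearMap_apply]
  exact ⟨mem_range_algebraMap_of_apply_eq_self hσ, fun ⟨c, hc⟩ ↦ hc ▸ σ.commutes c⟩

theorem finrank_range_sub_id (hσ : Subgroup.zpowers σ = ⊤) :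
    finrank k (LinearMap.range (σ.toLinearMap - LinearMap.id)) = finrank k L - 1 := by
  have h := LinearMap.finrank_range_add_finrank_ker (σ.toLinearMap - LinearMap.id)
  rw [ker_sub_id_eq_range_algebraMap hσ,
    LinearMap.finrank_range_of_inj (f := Algebra.linearMap k L) (algebraMap k L).injective,
    finrank_self] at h
  omega

theorem range_sub_id_eq_ker_trace (hσ : Subgroup.zpowers σ = ⊤) :
    LinearMap.range (σ.toLinearMap - LinearMap.id) = LinearMap.ker (Algebra.trace k L) := by
  refine Submodule.eq_of_le_of_finrank_le ?_ (by rw [finrank_ker_trace, finrank_range_sub_id hσ])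
  rintro _ ⟨x, rfl⟩
  simp [Algebra.trace_eq_of_algEquiv]

theorem exists_apply_sub_self_eq_of_trace_eq_zero (hσ : Subgroup.zpowers σ = ⊤) {x : L}
    (hx : Algebra.trace k L x = 0) : ∃ y, σ y - y = x :=
  (range_sub_id_eq_ker_trace hσ).ge hx

theorem exists_apply_eq_add_one {p : ℕ} [CharP k p] (hrank : finrank k L = p)
    (hσ : Subgroup.zpowers σ = ⊤) : ∃ α : L, σ α = α + 1 := by
  have htrace : Algebra.trace k L 1 = 0 := by
    rw [← map_one (algebraMap k L), Algebra.trace_algebraMap, hrank, nsmul_eq_mul,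
      CharP.cast_eq_zero, zero_mul]
  obtain ⟨α, hα⟩ := exists_apply_sub_self_eq_of_trace_eq_zero hσ htrace
  exact ⟨α, sub_eq_iff_eq_add'.mp hα⟩

end CyclicGalois

theorem Polynomial.monic_X_pow_sub_X_add_C {k : Type*} [CommRing k] {p : ℕ} (hp : 1 < p)
    (γ : k) :
    ((X : k[X]) ^ p - X + C γ).Monic := by
  rw [sub_add]
  exact monic_X_pow_sub (by compute_degree!)

theorem Polynomial.natDegree_X_pow_sub_X_add_C {k : Type*} [CommRing k] [Nontrivial k] {p : ℕ}
    (hp : 1 < p) (γ : k) :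
    ((X : k[X]) ^ p - X + C γ).natDegree = p := by
  rw [sub_add, natDegree_sub_eq_left_of_natDegree_lt] <;> compute_degree!

theorem Algebra.adjoin_singleton_eq_top_of_finrank_prime {k L : Type*} [Field k] [Field L]
    [Algebra k L]
    (hp : (finrank k L).Prime) {α : L} (hα : α ∉ Set.range (algebraMap k L)) :
    Algebra.adjoin k {α} = ⊤ := by
  have := Subalgebra.isSimpleOrder_of_finrank_prime k L hp
  refine (eq_bot_or_eq_top (Algebra.adjoin k {α})).resolve_left fun hbot ↦ hα ?_
  exact Algebra.mem_bot.mp (hbot ▸ Algebra.self_mem_adjoin_singleton k α)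

theorem minpoly.eq_of_adjoin_singleton_eq_top {k L : Type*} [Field k] [Field L] [Algebra k L]
    [FiniteDimensional k L] {α : L} (htop : Algebra.adjoin k {α} = ⊤) {f : k[X]} (hf : f.Monic)
    (hdeg : f.natDegree = finrank k L) (hα : Polynomial.aeval α f = 0) :
    f = minpoly k α := by
  have hint := IsIntegral.of_finite k α
  have hmin : (minpoly k α).natDegree = finrank k L := by
    rwa [← Field.primitive_element_iff_minpoly_natDegree_eq,
      IntermediateField.adjoin_simple_eq_top_iff_of_isAlgebraic hint.isAlgebraic]
  exact eq_of_monic_of_dvd_of_natDegree_le (minpoly.monic hint) hf (minpoly.dvd k α hα)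
    (hdeg.trans hmin.symm).le

theorem AlgEquiv.apply_pow_char_sub_self {k L : Type*} [CommRing k] [CommRing L] [Algebra k L]
    {p : ℕ} [Fact p.Prime] [CharP L p] {σ : L ≃ₐ[k] L} {α : L} (hα : σ α = α + 1) :
    σ (α ^ p - α) = α ^ p - α := by
  rw [map_sub, map_pow, hα, add_pow_char, one_pow]
  ring

/-- Artin–Schreier: If `L/k` is a Galois extension of fields of characteristic
`p > 0` with Galois group of order `p` (hence cyclic of order `p`), then there is `γ ∈ k`
such that `L = k(α)` for a root `α` of the irreducible polynomial `X^p - X + γ ∈ k[X]`. -/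
theorem artin_schreier
    {p : ℕ} (hp : p.Prime) (k L : Type*) [Field k] [CharP k p] [Field L] [Algebra k L]
    [IsGalois k L] (hcard : Nat.card (L ≃ₐ[k] L) = p) :
    ∃ γ : k, ∃ α : L,
      Irreducible ((X : k[X]) ^ p - X + C γ) ∧
      aeval α ((X : k[X]) ^ p - X + C γ) = 0 ∧
      Algebra.adjoin k ({α} : Set L) = ⊤ := by
  have : Fact p.Prime := ⟨hp⟩
  have : CharP L p := charP_of_injective_algebraMap (algebraMap k L).injective p
  have : Finite (L ≃ₐ[k] L) := Nat.finite_of_card_ne_zero (hcard ▸ hp.ne_zero)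
  have := IsGalois.finiteDimensional_of_finite k L
  have hrank : finrank k L = p := (IsGalois.card_aut_eq_finrank k L).symm.trans hcard
  obtain ⟨σ, hσ⟩ := isCyclic_iff_exists_zpowers_eq_top.mp (isCyclic_of_prime_card hcard)
  obtain ⟨α, hα⟩ := exists_apply_eq_add_one hrank hσ
  obtain ⟨c, hc⟩ := mem_range_algebraMap_of_apply_eq_self hσ
    (AlgEquiv.apply_pow_char_sub_self hα)
  have hα_notMem : α ∉ Set.range (algebraMap k L) := by
    rintro ⟨a, rfl⟩
    simp at hα
  have htop := Algebra.adjoin_singleton_eq_top_of_finrank_prime (hrank ▸ hp) hα_notMem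
  have hroot : aeval α ((X : k[X]) ^ p - X + C (-c)) = 0 := by simp [hc]
  refine ⟨-c, α, ?_, hroot, htop⟩
  rw [minpoly.eq_of_adjoin_singleton_eq_top htop (monic_X_pow_sub_X_add_C hp.one_lt _)
    (by rw [natDegree_X_pow_sub_X_add_C hp.one_lt, hrank]) hroot]
  exact minpoly.irreducible (IsIntegral.of_finite k α)
end

section
/- Let k be a field of characteristic p > 0, G a finite p-group, and A a trace-surjective G-algebra, i.e. a commutative k-algebra with G-action by algebra automorphisms such that tr(A) = A^G. Then for every nonzero invariant a ∈ A^G and every kG-submodule W ≤ A which is free of rank one with 1 ∈ tr(W), the module aW is again a free kG-module of rank one (isomorphic to the regular module kG). -/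
/-- Let `A` be a trace-surjective commutative `G`-algebra (`G` a finite
`p`-group, `char k = p`). If `W ≤ A` is a `kG`-submodule which is free of rank one with
basis the orbit of a point `w` (so `tr w = 1 ∈ tr(W)`), then for every nonzero invariant
`a ∈ A^G` the module `aW` is again free of rank one over `kG`, i.e. the orbit
`{a·(w·g) : g ∈ G}` is linearly independent over `k` (so `aW ≅ W ≅ kG`, the regular
module, via `w·g ↦ a·(w·g)`). -/
theorem smul_point_module_free
    {p : ℕ} [Fact p.Prime] (k : Type*) [Field k] [CharP k p]
    (G : Type*) [Group G] [Fintype G] (hG : IsPGroup p G)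
    (A : Type*) [CommRing A] [Algebra k A] [MulSemiringAction G A] [SMulCommClass G k A]
    (hts : ∀ b : A, (∀ g : G, g • b = b) → ∃ x : A, (∑ g : G, g • x) = b)
    (w : A) (hw : (∑ g : G, g • w) = 1)
    (hlin : LinearIndependent k (fun g : G => g • w))
    (a : A) (ha : a ≠ 0) (hainv : ∀ g : G, g • a = a) :
    LinearIndependent k (fun g : G => a * (g • w)) := by
  classical
  have hA : Nontrivial A := nontrivial_of_ne a 0 ha
  have hcharA : CharP A p := charP_of_injective_algebraMap (algebraMap k A).injective p
  letI : Algebra (ZMod p) A := ZMod.algebra _ _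
  -- ZMod p smul is nsmul
  have hzmod : ∀ (z : ZMod p) (x : A), z • x = (z.val : ℕ) • x := by
    intro z x
    rw [Algebra.smul_def, ← ZMod.natCast_rightInverse z, map_natCast, ← nsmul_eq_mul]
    simp [ZMod.natCast_rightInverse z]
  -- G acts trivially on nat casts
  have hnat : ∀ (g : G) (n : ℕ), g • (n : A) = (n : A) := fun g n =>
    map_natCast (MulSemiringAction.toRingHom G A g) n
  have hzG : ∀ (g : G) (z : ZMod p) (x : A), g • (z • x) = z • (g • x) := by
    intro g z x
    rw [hzmod, hzmod, nsmul_eq_mul, nsmul_eq_mul, smul_mul', hnat]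
  rw [Fintype.linearIndependent_iff] at hlin ⊢
  intro c hc
  set v : A := ∑ g : G, c g • (g • w) with hv
  have hav : a * v = 0 := by
    rw [hv, Finset.mul_sum]
    simpa [mul_smul_comm] using hc
  suffices hv0 : v = 0 by
    intro g; exact hlin c hv0 g
  by_contra hv0
  -- a kills the whole orbit of v
  have havg : ∀ g : G, a * (g • v) = 0 := by
    intro g
    have : g • (a * v) = 0 := by rw [hav, smul_zero]
    rwa [smul_mul', hainv] at this
  -- the ZMod p span of the orbit of v
  set V : Submodule (ZMod p) A := Submodule.span (ZMod p) (Set.range fun g : G => g • v)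
    with hV
  have hvV : v ∈ V := Submodule.subset_span ⟨1, one_smul G v⟩
  haveI hVfin : Module.Finite (ZMod p) V :=
    Module.Finite.span_of_finite _ (Set.finite_range _)
  haveI : Finite V := Module.finite_of_finite (ZMod p)
  haveI : Nontrivial V := ⟨⟨⟨v, hvV⟩, 0, by simpa [Subtype.ext_iff] using hv0⟩⟩
  -- G-stability of V
  have hstab : ∀ (g : G) (x : A), x ∈ V → g • x ∈ V := by
    intro g x hx
    induction hx using Submodule.span_induction with
    | mem x hx =>
        obtain ⟨h, rfl⟩ := hx
        exact Submodule.subset_span ⟨g * h, by simpa using mul_smul g h v⟩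
    | zero => simpa using Submodule.zero_mem V
    | add x y _ _ hx hy => rw [smul_add]; exact Submodule.add_mem V hx hy
    | smul z x _ hx => rw [hzG]; exact Submodule.smul_mem V z hx
  letI : MulAction G V :=
    { smul := fun g x => ⟨g • (x : A), hstab g x x.2⟩
      one_smul := fun x => Subtype.ext (one_smul G (x : A))
      mul_smul := fun g h x => Subtype.ext (mul_smul g h (x : A)) }
  have hsmul_coe : ∀ (g : G) (x : V), ((g • x : V) : A) = g • (x : A) := fun _ _ => rfl
  -- p divides card V
  letI : Fintype V := Fintype.ofFinite V
  have hcard : Fintype.card V = Fintype.card (ZMod p) ^ Module.finrank (ZMod p) V :=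
    Module.card_eq_pow_finrank
  have hfrpos : 0 < Module.finrank (ZMod p) V := Module.finrank_pos
  have hpdvd : p ∣ Nat.card V := by
    rw [Nat.card_eq_fintype_card, hcard, ZMod.card]
    exact dvd_pow_self p hfrpos.ne'
  -- fixed points
  have hcong := hG.card_modEq_card_fixedPoints V
  have hpdvdfix : p ∣ Nat.card (MulAction.fixedPoints G V) := by
    have h0 : Nat.card V ≡ 0 [MOD p] := (Nat.modEq_zero_iff_dvd).mpr hpdvd
    exact (Nat.modEq_zero_iff_dvd).mp (hcong.symm.trans h0)
  have hzero_fixed : (0 : V) ∈ MulAction.fixedPoints G V := by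
    intro g; exact Subtype.ext (smul_zero g)
  haveI : Nonempty (MulAction.fixedPoints G V) := ⟨⟨0, hzero_fixed⟩⟩
  letI : Fintype (MulAction.fixedPoints G V) := Fintype.ofFinite _
  have hcardfix : 1 < Fintype.card (MulAction.fixedPoints G V) := by
    have hpos : 0 < Fintype.card (MulAction.fixedPoints G V) := Fintype.card_pos
    rw [Nat.card_eq_fintype_card] at hpdvdfix
    have hp2 : 2 ≤ p := (Fact.out : p.Prime).two_le
    exact lt_of_lt_of_le (by omega) (Nat.le_of_dvd hpos hpdvdfix)
  obtain ⟨z, hz⟩ := Fintype.exists_ne_of_one_lt_card hcardfix ⟨0, hzero_fixed⟩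
  -- the fixed point x
  set x : A := ((z : V) : A) with hx
  have hxV : x ∈ V := (z : V).2
  have hxne : x ≠ 0 := by
    intro h
    apply hz
    apply Subtype.ext
    apply Subtype.ext
    exact h
  have hxfix : ∀ g : G, g • x = x := fun g => congrArg Subtype.val (z.2 g)
  -- a * x = 0
  have hax_all : ∀ y ∈ V, a * y = 0 := by
    intro y hy
    induction hy using Submodule.span_induction with
    | mem y hy => obtain ⟨g, rfl⟩ := hy; exact havg g
    | zero => exact mul_zero a
    | add y y' _ _ hy hy' => rw [mul_add, hy, hy', add_zero]
    | smul z y _ hy => rw [mul_smul_comm, hy, smul_zero]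
  have hax : a * x = 0 := hax_all x hxV
  -- x lies in the k-span of the orbit of w
  have hxW_all : ∀ y ∈ V, y ∈ Submodule.span k (Set.range fun g : G => g • w) := by
    have hgen : ∀ g : G, g • v ∈ Submodule.span k (Set.range fun g : G => g • w) := by
      intro g
      rw [hv, Finset.smul_sum]
      apply Submodule.sum_mem
      intro g' _
      rw [smul_comm, ← mul_smul]
      exact Submodule.smul_mem _ _ (Submodule.subset_span ⟨g * g', rfl⟩)
    intro y hy
    induction hy using Submodule.span_induction with
    | mem y hy => obtain ⟨g, rfl⟩ := hy; exact hgen g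
    | zero => exact Submodule.zero_mem _
    | add y y' _ _ hy hy' => exact Submodule.add_mem _ hy hy'
    | smul z y _ hy =>
        rw [hzmod]
        exact nsmul_mem hy z.val
  have hxW : x ∈ Submodule.span k (Set.range fun g : G => g • w) := hxW_all x hxV
  obtain ⟨d, hd⟩ := (Submodule.mem_span_range_iff_exists_fun k).mp hxW
  -- invariance forces constant coefficients
  have hdconst : ∀ g : G, d g = d 1 := by
    have key : ∀ h g : G, d (h⁻¹ * g) = d g := by
      intro h g
      have h1 : ∑ g : G, d (h⁻¹ * g) • (g • w) = x := by
        rw [← hxfix h, ← hd, Finset.smul_sum]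
        rw [← Equiv.sum_comp (Equiv.mulLeft h) (fun g => d (h⁻¹ * g) • (g • w))]
        apply Finset.sum_congr rfl
        intro g' _
        simp [smul_comm (h : G) (d g'), mul_smul]
      have h2 : ∑ g : G, (d (h⁻¹ * g) - d g) • (g • w) = 0 := by
        simp only [sub_smul, Finset.sum_sub_distrib, h1, hd, sub_self]
      exact sub_eq_zero.mp (hlin _ h2 g)
    intro g
    have h3 := key g g
    rw [inv_mul_cancel] at h3
    exact h3.symm
  have hx1 : x = d 1 • (1 : A) := by
    rw [← hd, ← hw, Finset.smul_sum]
    apply Finset.sum_congr rfl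
    intro g _
    rw [hdconst g]
  have hd1 : d 1 ≠ 0 := by
    intro h
    apply hxne
    rw [hx1, h, zero_smul]
  -- contradiction
  have : a = 0 := by
    have h1 : d 1 • a = 0 := by
      have : a * x = d 1 • a := by rw [hx1, mul_smul_comm, mul_one]
      rw [← this, hax]
    have := congrArg (fun y => (d 1)⁻¹ • y) h1
    simpa [smul_smul, inv_mul_cancel₀ hd1] using this
  exact ha this
end

section
/- Let k be a field of characteristic p > 0, G a finite p-group, and A a trace-surjective commutative G-algebra with a point w ∈ A (tr(w) = 1). Then A = ⊕_{g∈G} A^G·(w·g); in particular A is a free A^G-module of rank |G| and a free A^G[G]-module of rank one. -/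
/-!
Let `M = ((g * h) • w)_{g,h}` be the group matrix of the orbit of `w`. Because
`(M *ᵥ (σ • u)) g = σ • (M *ᵥ u) (σ⁻¹ * g)`, an invertible `M` makes the orbit a basis over
`A^G`: `M` kills the coefficient vector of every invariant relation, and `M⁻¹` sends `(g • a)_g`
to an invariant vector `u` with `a = ∑ h, u h * h • w`.

`M` is invertible because its determinant survives in every residue field of `A`, which has
characteristic `p`. Over a ring of characteristic `p`, a nonzero kernel vector of `M` would span,
with its translates, a finite nonzero `𝔽_p`-space of kernel vectors, in which the `p`-group `G`
fixes a nonzero vector `u` by counting orbits mod `p`. But `u` is constant, so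
`0 = (M *ᵥ u) 1 = (∑ g, g • w) * u 1 = u 1`.
-/

/-- The subalgebra of `G`-invariants of a `G`-algebra `A`. -/
def invariantSubalgebra (k G A : Type*) [CommSemiring k] [Group G] [CommRing A] [Algebra k A]
    [MulSemiringAction G A] [SMulCommClass G k A] : Subalgebra k A where
  carrier := {a | ∀ g : G, g • a = a}
  add_mem' := by intro a b ha hb g; rw [smul_add, ha g, hb g]
  mul_mem' := by intro a b ha hb g; rw [smul_mul', ha g, hb g]
  algebraMap_mem' := by
    intro c g
    rw [Algebra.algebraMap_eq_smul_one, smul_comm, smul_one]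
  one_mem' := fun g => smul_one g
  zero_mem' := fun g => smul_zero g

open Finset

section FixedVectors

variable {p : ℕ} [Fact p.Prime] {G V : Type*} [Group G] [Finite G]
  [AddCommGroup V] [Module (ZMod p) V] [DistribMulAction G V] [SMulCommClass G (ZMod p) V]

theorem IsPGroup.exists_mem_ne_zero_smul_eq_self (hG : IsPGroup p G)
    {K : Submodule (ZMod p) V} (hK : ∀ g : G, ∀ u ∈ K, g • u ∈ K) {v : V} (hvK : v ∈ K)
    (hv : v ≠ 0) : ∃ u ∈ K, u ≠ 0 ∧ ∀ g : G, g • u = u := by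
  set W := Submodule.span (ZMod p) (MulAction.orbit G v)
  have hWK : W ≤ K := Submodule.span_le.mpr (by rintro _ ⟨g, rfl⟩; exact hK g v hvK)
  have hW : ∀ g : G, ∀ u ∈ W, g • u ∈ W := by
    intro g u hu
    induction hu using Submodule.span_induction with
    | mem x hx => exact Submodule.subset_span (MulAction.mem_orbit_of_mem_orbit g hx)
    | zero => rw [smul_zero]; exact W.zero_mem
    | add x y _ _ hx hy => rw [smul_add]; exact W.add_mem hx hy
    | smul c x _ hx => rw [smul_comm]; exact W.smul_mem c hx
  let S : SubMulAction G V := ⟨W, fun g _ hu => hW g _ hu⟩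
  have : Module.Finite (ZMod p) W := Module.Finite.span_of_finite _ (Set.finite_range _)
  have : Finite S := Module.finite_of_finite (ZMod p) (M := W)
  have hvW : v ∈ W := Submodule.subset_span (MulAction.mem_orbit_self v)
  have hpS : p ∣ Nat.card S := by
    have : 0 < Module.finrank (ZMod p) W :=
      Module.finrank_pos_iff_exists_ne_zero.mpr ⟨⟨v, hvW⟩, by simpa using hv⟩
    rw [show Nat.card S = Nat.card W from rfl, Module.natCard_eq_pow_finrank (K := ZMod p),
      Nat.card_zmod]
    exact dvd_pow_self p this.ne'
  obtain ⟨u, hu, hne⟩ := hG.exists_fixed_point_of_prime_dvd_card_of_fixed_point S hpS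
    (a := ⟨0, W.zero_mem⟩) fun g => Subtype.ext (smul_zero g)
  exact ⟨u, hWK u.2, fun h => hne (Subtype.ext h.symm), fun g => congrArg Subtype.val (hu g)⟩

end FixedVectors

open Matrix

def groupMatrix {G R : Type*} [Mul G] (y : G → R) : Matrix G G R :=
  Matrix.of fun g h => y (g * h)

theorem groupMatrix_mulVec_apply {G R : Type*} [Mul G] [Fintype G] [NonUnitalNonAssocSemiring R]
    (y : G → R) (v : G → R) (g : G) : (groupMatrix y *ᵥ v) g = ∑ h, y (g * h) * v h :=
  rfl

section GroupMatrix

variable {p : ℕ} [Fact p.Prime] {G : Type*} [Group G] [Fintype G]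

theorem IsPGroup.eq_zero_of_groupMatrix_mulVec_eq_zero {R : Type*} [CommRing R] [CharP R p]
    (hG : IsPGroup p G) {y : G → R} (hy : ∑ g, y g = 1) {v : G → R}
    (hv : groupMatrix y *ᵥ v = 0) : v = 0 := by
  let _ : Algebra (ZMod p) R := ZMod.algebra R p
  let _ : DistribMulAction G (G → R) :=
    { arrowAction with smul_zero := fun _ => rfl, smul_add := fun _ _ _ => rfl }
  have : SMulCommClass G (ZMod p) (G → R) := ⟨fun _ _ _ => rfl⟩
  have smul_apply (σ : G) (u : G → R) (h : G) : (σ • u) h = u (σ⁻¹ * h) := rfl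
  let K := (LinearMap.ker (groupMatrix y).mulVecLin).restrictScalars (ZMod p)
  have hK : ∀ σ : G, ∀ u ∈ K, σ • u ∈ K := by
    intro σ u hu
    funext g
    have := congrFun hu (g * σ)
    rw [Pi.zero_apply, mulVecLin_apply, groupMatrix_mulVec_apply] at this ⊢
    rw [← this]
    exact Fintype.sum_equiv (Equiv.mulLeft σ⁻¹) _ _ fun h => by simp [smul_apply, mul_assoc]
  by_contra hv0
  obtain ⟨u, huK, hu0, hfix⟩ := hG.exists_mem_ne_zero_smul_eq_self hK hv hv0
  have hconst : ∀ h, u h = u 1 := fun h => by simpa [smul_apply] using (congrFun (hfix h) h).symm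
  have hu1 : u 1 = 0 := by
    have := congrFun huK 1
    rw [mulVecLin_apply, groupMatrix_mulVec_apply] at this
    simpa [hconst _, ← sum_mul, hy] using this
  exact hu0 (funext fun h => (hconst h).trans hu1)

theorem IsPGroup.isUnit_groupMatrix [DecidableEq G] {A : Type*} [CommRing A] (hG : IsPGroup p G)
    (hp : (p : A) = 0) {y : G → A} (hy : ∑ g, y g = 1) : IsUnit (groupMatrix y) := by
  rw [Matrix.isUnit_iff_isUnit_det]
  by_contra hdet
  obtain ⟨m, hm, hdet_mem⟩ := exists_max_ideal_of_mem_nonunits hdet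
  let _ : Field (A ⧸ m) := Ideal.Quotient.field m
  let π := Ideal.Quotient.mk m
  have : CharP (A ⧸ m) p :=
    (CharP.charP_iff_prime_eq_zero Fact.out).mpr (by rw [← map_natCast π, hp, map_zero])
  have hyπ : ∑ g, π (y g) = 1 := by rw [← map_sum, hy, map_one]
  have hdetπ : (groupMatrix (π ∘ y)).det = 0 := by
    rw [show groupMatrix (π ∘ y) = π.mapMatrix (groupMatrix y) from rfl, ← RingHom.map_det]
    exact Ideal.Quotient.eq_zero_iff_mem.mpr hdet_mem
  obtain ⟨v, hv0, hv⟩ := Matrix.exists_mulVec_eq_zero_iff.mpr hdetπ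
  exact hv0 (hG.eq_zero_of_groupMatrix_mulVec_eq_zero hyπ hv)

end GroupMatrix

section Orbit

variable {G A : Type*} [Group G] [Fintype G] [CommRing A] [MulSemiringAction G A]

theorem groupMatrix_orbit_mulVec_smul (w : A) (u : G → A) (σ g : G) :
    (groupMatrix (fun g : G => g • w) *ᵥ fun h => σ • u h) g =
      σ • (groupMatrix (fun g : G => g • w) *ᵥ u) (σ⁻¹ * g) := by
  simp only [groupMatrix_mulVec_apply, smul_sum, smul_mul', smul_smul, mul_assoc,
    mul_inv_cancel_left]

theorem groupMatrix_orbit_mulVec_of_invariant (w : A) {u : G → A}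
    (hu : ∀ (σ : G) h, σ • u h = u h) (g : G) :
    (groupMatrix (fun g : G => g • w) *ᵥ u) g = g • ∑ h, u h * h • w := by
  have := groupMatrix_orbit_mulVec_smul w u g g
  simp only [hu, inv_mul_cancel, groupMatrix_mulVec_apply, one_mul] at this
  rw [groupMatrix_mulVec_apply, this]
  simp only [mul_comm]

variable [DecidableEq G] (k : Type*) [CommRing k] [Algebra k A] [SMulCommClass G k A] {w : A}

theorem linearIndependent_smul_of_isUnit_groupMatrix
    (hM : IsUnit (groupMatrix fun g : G => g • w)) :
    LinearIndependent (invariantSubalgebra k G A) fun g : G => g • w := by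
  rw [Fintype.linearIndependent_iff]
  intro c hc
  have hu : groupMatrix (fun g : G => g • w) *ᵥ (fun h => (c h : A)) = 0 := by
    funext g
    rw [groupMatrix_orbit_mulVec_of_invariant w (fun σ h => (c h).2 σ) g]
    simpa [Subalgebra.smul_def] using congrArg (g • ·) hc
  intro h
  exact Subtype.ext (congrFun (Matrix.mulVec_injective_of_isUnit hM
    (hu.trans (Matrix.mulVec_zero _).symm)) h)

theorem span_smul_eq_top_of_isUnit_groupMatrix
    (hM : IsUnit (groupMatrix fun g : G => g • w)) :
    Submodule.span (invariantSubalgebra k G A) (Set.range fun g : G => g • w) = ⊤ := by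
  refine eq_top_iff.mpr fun a _ => ?_
  obtain ⟨u, hu⟩ := Matrix.mulVec_surjective_iff_isUnit.mpr hM fun g => g • a
  have hu_inv : ∀ (σ : G) h, σ • u h = u h := by
    intro σ
    refine congrFun (Matrix.mulVec_injective_of_isUnit hM ?_)
    funext g
    rw [groupMatrix_orbit_mulVec_smul, hu, smul_smul, mul_inv_cancel_left]
  have ha : a = ∑ h, (⟨u h, (hu_inv · h)⟩ : invariantSubalgebra k G A) • h • w := by
    have := groupMatrix_orbit_mulVec_of_invariant w hu_inv 1
    simp only [hu, one_smul] at this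
    simpa [Subalgebra.smul_def] using this
  rw [ha]
  exact Submodule.sum_mem _ fun h _ => Submodule.smul_mem _ _ (Submodule.subset_span ⟨h, rfl⟩)

end Orbit

theorem point_orbit_basis_over_invariants_general
    {p : ℕ} [Fact p.Prime] (k : Type*) [Field k] [CharP k p]
    (G : Type*) [Group G] [Fintype G] (hG : IsPGroup p G)
    (A : Type*) [CommRing A] [Algebra k A] [MulSemiringAction G A] [SMulCommClass G k A]
    (w : A) (hw : (∑ g : G, g • w) = 1) :
    ∃ b : Module.Basis G (invariantSubalgebra k G A) A, ∀ g : G, b g = g • w := by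
  classical
  have hp : (p : A) = 0 := by rw [← map_natCast (algebraMap k A), CharP.cast_eq_zero, map_zero]
  have hM := hG.isUnit_groupMatrix hp (y := fun g : G => g • w) hw
  exact ⟨.mk (linearIndependent_smul_of_isUnit_groupMatrix k hM)
    (span_smul_eq_top_of_isUnit_groupMatrix k hM).ge, Module.Basis.mk_apply _ _⟩

/-- If `A` is a trace-surjective commutative `G`-algebra with a point `w`
(`tr w = 1`), then `A = ⊕_{g∈G} A^G·(w·g)`: the orbit of `w` is a basis of `A` as a module
over the invariant ring `A^G` (hence `A` is free of rank `|G|` over `A^G`, and free of rank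
one over the group ring `A^G[G]`). -/
theorem point_orbit_basis_over_invariants
    {p : ℕ} [Fact p.Prime] (k : Type*) [Field k] [CharP k p]
    (G : Type*) [Group G] [Fintype G] (hG : IsPGroup p G)
    (A : Type*) [CommRing A] [Algebra k A] [MulSemiringAction G A] [SMulCommClass G k A]
    (hts : ∀ b : A, (∀ g : G, g • b = b) → ∃ x : A, (∑ g : G, g • x) = b)
    (w : A) (hw : (∑ g : G, g • w) = 1) :
    ∃ b : Module.Basis G (invariantSubalgebra k G A) A, ∀ g : G, b g = g • w :=
  point_orbit_basis_over_invariants_general k G hG A w hw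
end

section
/- Let k be a field of characteristic p > 0, G a finite p-group, and A a trace-surjective commutative G-algebra. Then for every G-stable proper ideal J of A, the quotient A/J is again a trace-surjective G-algebra and (A/J)^G ≅ A^G / J^G (where J^G = J ∩ A^G). -/
/-- If `A` is a trace-surjective commutative `G`-algebra (`G` a finite
`p`-group, `char k = p`) and `J` is a proper `G`-stable ideal of `A`, then `A/J` is again
trace-surjective, and the canonical map `A^G → (A/J)^G` is surjective with kernel
`J^G = J ∩ A^G` (so `(A/J)^G ≅ A^G/J^G`).  Both facts are phrased elementwise: every
element of `A` which is invariant modulo `J` is, modulo `J`, the transfer of some element,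
and indeed is congruent modulo `J` to a genuine invariant of `A`. -/
theorem quotient_trace_surjective_and_invariants
    {p : ℕ} [Fact p.Prime] (k : Type*) [Field k] [CharP k p]
    (G : Type*) [Group G] [Fintype G] (hG : IsPGroup p G)
    (A : Type*) [CommRing A] [Algebra k A] [MulSemiringAction G A] [SMulCommClass G k A]
    (hts : ∀ b : A, (∀ g : G, g • b = b) → ∃ x : A, (∑ g : G, g • x) = b)
    (J : Ideal A) (hJne : J ≠ ⊤) (hJst : ∀ (g : G), ∀ a ∈ J, g • a ∈ J) :
    (∀ b : A, (∀ g : G, g • b - b ∈ J) → ∃ x : A, (∑ g : G, g • x) - b ∈ J) ∧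
    (∀ b : A, (∀ g : G, g • b - b ∈ J) → ∃ x : A, (∀ g : G, g • x = x) ∧ x - b ∈ J) := by
  obtain ⟨c, hc⟩ := hts 1 (fun g => smul_one g)
  have key : ∀ b : A, (∀ g : G, g • b - b ∈ J) → (∑ g : G, g • (c * b)) - b ∈ J := by
    intro b hb
    have h1 : (∑ g : G, g • (c * b)) - b = ∑ g : G, (g • c) * (g • b - b) := by
      simp only [smul_mul', mul_sub, Finset.sum_sub_distrib, ← Finset.sum_mul, hc, one_mul]
    rw [h1]
    exact Ideal.sum_mem _ fun g _ => Ideal.mul_mem_left _ _ (hb g)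
  have hinv : ∀ (y : A) (g : G), g • (∑ h : G, h • y) = ∑ h : G, h • y := by
    intro y g
    rw [Finset.smul_sum]
    exact Fintype.sum_equiv (Equiv.mulLeft g) _ _ fun h => by
      simp [smul_smul]
  exact ⟨fun b hb => ⟨c * b, key b hb⟩,
    fun b hb => ⟨∑ g : G, g • (c * b), fun g => hinv _ g, key b hb⟩⟩
end

section
/- Let k be a field of characteristic p > 0, G a finite p-group, and A a trace-surjective commutative G-algebra. Then the maps I ↦ AI and J ↦ J ∩ A^G are mutually inverse bijections between the set of ideals of A^G and the set of G-stable ideals of A. In particular, every ideal I of A^G satisfies AI ∩ A^G = I, and every G-stable ideal J of A satisfies (J ∩ A^G)A = J. -/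
/-!
Pick `c` with `tr c = 1`. Then `x ↦ tr (c x)` is an `A^G`-linear retraction of `A^G → A`, which
gives `AI ∩ A^G = I`. For a `G`-stable ideal `J`, let `K = (J ∩ A^G)A ⊆ J`. As `p` kills `A`, the
orbit of `a ∈ J` generates a finite `p`-group, and if `a ∉ K` the fixed-point congruence for `G`
acting on its image in `A/K` yields `b ∈ J \ K` with `g b - b ∈ K` for all `g`. But then
`b = tr (c b) - ∑ g, g(c) (g b - b)` lies in `K`, because `tr (c b) ∈ J ∩ A^G`.
-/

section QuotientAction

variable {G V : Type*} [Monoid G] [AddCommGroup V] [DistribMulAction G V]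

abbrev AddSubgroup.quotientDistribMulAction (K : AddSubgroup V)
    (hK : ∀ g : G, ∀ v ∈ K, g • v ∈ K) : DistribMulAction G (V ⧸ K) :=
  letI : SMul G (V ⧸ K) :=
    ⟨fun g => QuotientAddGroup.map K K (DistribSMul.toAddMonoidHom V g) (hK g)⟩
  (QuotientAddGroup.mk'_surjective K).distribMulAction (QuotientAddGroup.mk' K) fun _ _ => rfl

end QuotientAction

section PGroupFixedPoints

variable {p : ℕ} [Fact p.Prime] {G : Type*} [Group G]
  {V : Type*} [AddCommGroup V] [DistribMulAction G V]

theorem IsPGroup.exists_fixed_ne_zero_mem_closure_orbit [Finite G] (hG : IsPGroup p G)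
    (hV : ∀ v : V, p • v = 0) {x : V} (hx : x ≠ 0) :
    ∃ v ∈ AddSubgroup.closure (Set.range fun g : G => g • x), v ≠ 0 ∧ ∀ g : G, g • v = v := by
  set W := AddSubgroup.closure (Set.range fun g : G => g • x)
  have hxW : x ∈ W := AddSubgroup.subset_closure ⟨1, one_smul G x⟩
  have : Finite W := AddCommGroup.finite_of_fg_isAddTorsion W fun w =>
    isOfFinAddOrder_iff_nsmul_eq_zero.mpr ⟨p, Nat.Prime.pos Fact.out, Subtype.ext (hV w)⟩
  let S : SubMulAction G V :=
    { carrier := W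
      smul_mem' := fun g v hv => by
        induction hv using AddSubgroup.closure_induction with
        | mem v hv =>
          obtain ⟨h, rfl⟩ := hv
          exact AddSubgroup.subset_closure ⟨g * h, mul_smul g h x⟩
        | zero => rw [smul_zero]; exact W.zero_mem
        | add v w _ _ hv hw => rw [smul_add]; exact W.add_mem hv hw
        | neg v _ hv => rw [smul_neg]; exact W.neg_mem hv }
  have hpW : p ∣ Nat.card W := by
    have hxW' : (⟨x, hxW⟩ : W) ≠ 0 := fun h => hx (congrArg Subtype.val h)
    exact addOrderOf_eq_prime (Subtype.ext (hV x)) hxW' ▸ addOrderOf_dvd_natCard _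
  obtain ⟨⟨v, hvW⟩, hv, hv0⟩ := hG.exists_fixed_point_of_prime_dvd_card_of_fixed_point S hpW
    (a := ⟨0, W.zero_mem⟩) fun g => Subtype.ext (smul_zero g)
  exact ⟨v, hvW, fun h => hv0 (Subtype.ext h.symm), fun g => congrArg Subtype.val (hv g)⟩

theorem IsPGroup.exists_smul_sub_mem_of_notMem [Finite G] (hG : IsPGroup p G)
    (hV : ∀ v : V, p • v = 0) (K : AddSubgroup V) (hK : ∀ g : G, ∀ v ∈ K, g • v ∈ K) {x : V}
    (hx : x ∉ K) :
    ∃ v ∈ AddSubgroup.closure (Set.range fun g : G => g • x), v ∉ K ∧ ∀ g : G, g • v - v ∈ K := by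
  let := K.quotientDistribMulAction hK
  have hVK (v : V ⧸ K) : p • v = 0 := by
    induction v using QuotientAddGroup.induction_on with
    | H v => rw [← QuotientAddGroup.mk_nsmul, hV, QuotientAddGroup.mk_zero]
  have hclosure : AddSubgroup.closure (Set.range fun g : G => g • (x : V ⧸ K)) =
      (AddSubgroup.closure (Set.range fun g : G => g • x)).map (QuotientAddGroup.mk' K) := by
    rw [AddMonoidHom.map_closure, ← Set.range_comp]
    rfl
  obtain ⟨_, hw, hw0, hwfix⟩ := hG.exists_fixed_ne_zero_mem_closure_orbit hVK
    (mt (QuotientAddGroup.eq_zero_iff x).mp hx)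
  rw [hclosure] at hw
  obtain ⟨v, hv, rfl⟩ := hw
  exact ⟨v, hv, mt (QuotientAddGroup.eq_zero_iff v).mpr hw0,
    fun g => QuotientAddGroup.eq_iff_sub_mem.mp (hwfix g)⟩

end PGroupFixedPoints

theorem Ideal.comap_map_eq_self_of_retraction {R A : Type*} [CommSemiring R] [CommSemiring A]
    [Algebra R A] (ρ : A →ₗ[R] R) (hρ : ∀ r, ρ (algebraMap R A r) = r) (I : Ideal R) :
    (I.map (algebraMap R A)).comap (algebraMap R A) = I := by
  refine le_antisymm (fun r hr => ?_) Ideal.le_comap_map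
  have hr' : algebraMap R A r ∈ I • (⊤ : Submodule R A) := by
    rw [Ideal.smul_top_eq_map]; exact hr
  rw [← hρ r]
  refine Submodule.smul_induction_on (p := fun x => ρ x ∈ I) hr' (fun i hi a _ => ?_)
    fun x y hx hy => ?_
  · rw [map_smul, smul_eq_mul]; exact I.mul_mem_right _ hi
  · rw [map_add]; exact I.add_mem hx hy

theorem smul_sum_smul {G M : Type*} [Group G] [Fintype G] [AddCommMonoid M]
    [DistribMulAction G M] (g : G) (x : M) : g • ∑ h : G, h • x = ∑ h : G, h • x := by
  simp only [Finset.smul_sum, smul_smul]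
  exact Equiv.sum_comp (Equiv.mulLeft g) (· • x)

theorem mem_of_sum_smul_mul_mem_of_smul_sub_mem {G A : Type*} [Group G] [Fintype G] [CommRing A]
    [MulSemiringAction G A] {K : Ideal A} {c b : A} (hc : ∑ g : G, g • c = 1)
    (hcb : ∑ g : G, g • (c * b) ∈ K) (hb : ∀ g : G, g • b - b ∈ K) : b ∈ K := by
  have hsplit : b = ∑ g : G, g • (c * b) - ∑ g : G, g • c * (g • b - b) := by
    simp only [mul_sub, Finset.sum_sub_distrib, smul_mul', ← Finset.sum_mul, hc, one_mul]
    ring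
  rw [hsplit]
  exact K.sub_mem hcb (K.sum_mem fun g _ => K.mul_mem_left _ (hb g))

section InvariantSubalgebra

variable (k G A : Type*) [CommSemiring k] [Group G] [CommRing A] [Algebra k A]
  [MulSemiringAction G A] [SMulCommClass G k A]

def invariantTrace [Fintype G] :
    A →ₗ[invariantSubalgebra k G A] invariantSubalgebra k G A where
  toFun x := ⟨∑ g : G, g • x, fun g => smul_sum_smul g x⟩
  map_add' x y := Subtype.ext <| by simp only [smul_add, Finset.sum_add_distrib]; rfl
  map_smul' r x := Subtype.ext <| by
    show ∑ g : G, g • ((r : A) * x) = r * ∑ g : G, g • x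
    simp only [smul_mul', Finset.mul_sum, r.2 _]

variable {k G A}

theorem smul_mem_map_val {I : Ideal (invariantSubalgebra k G A)} (g : G) {x : A}
    (hx : x ∈ I.map (invariantSubalgebra k G A).val) :
    g • x ∈ I.map (invariantSubalgebra k G A).val := by
  have hstable : I.map (invariantSubalgebra k G A).val ≤
      (I.map (invariantSubalgebra k G A).val).comap (MulSemiringAction.toRingHom G A g) :=
    Ideal.map_le_iff_le_comap.mpr fun i hi => by
      rw [Ideal.mem_comap, Ideal.mem_comap, MulSemiringAction.toRingHom_apply,
        Subalgebra.coe_val, i.2 g]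
      exact Ideal.mem_map_of_mem _ hi
  exact hstable hx

end InvariantSubalgebra

/-- For a trace-surjective commutative `G`-algebra `A` (`G` a finite
`p`-group, `char k = p`), extension `I ↦ AI` and contraction `J ↦ J ∩ A^G` are mutually
inverse bijections between ideals of `A^G` and `G`-stable ideals of `A`:
`AI ∩ A^G = I` for every ideal `I` of `A^G`, and `(J ∩ A^G)A = J` for every `G`-stable
ideal `J` of `A`. -/
theorem ideal_galois_correspondence
    {p : ℕ} [Fact p.Prime] (k : Type*) [Field k] [CharP k p]
    (G : Type*) [Group G] [Fintype G] (hG : IsPGroup p G)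
    (A : Type*) [CommRing A] [Algebra k A] [MulSemiringAction G A] [SMulCommClass G k A]
    (hts : ∀ b : A, (∀ g : G, g • b = b) → ∃ x : A, (∑ g : G, g • x) = b) :
    (∀ I : Ideal (invariantSubalgebra k G A),
        Ideal.comap (invariantSubalgebra k G A).val
          (Ideal.map (invariantSubalgebra k G A).val I) = I) ∧
    (∀ J : Ideal A, (∀ (g : G), ∀ a ∈ J, g • a ∈ J) →
        Ideal.map (invariantSubalgebra k G A).val
          (Ideal.comap (invariantSubalgebra k G A).val J) = J) := by
  obtain ⟨c, hc⟩ := hts 1 fun g => smul_one g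
  have hp (a : A) : p • a = 0 := by
    rw [nsmul_eq_mul, ← map_natCast (algebraMap k A), CharP.cast_eq_zero, map_zero, zero_mul]
  refine ⟨fun I => ?_, fun J hJ => ?_⟩
  · refine Ideal.comap_map_eq_self_of_retraction
      ((invariantTrace k G A).comp (LinearMap.mulLeft _ c)) (fun r => ?_) I
    rw [LinearMap.comp_apply, LinearMap.mulLeft_apply, mul_comm, ← Algebra.smul_def, map_smul,
      show invariantTrace k G A c = 1 from Subtype.ext hc, smul_eq_mul, mul_one]
  · set K := (J.comap (invariantSubalgebra k G A).val).map (invariantSubalgebra k G A).val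
    refine le_antisymm Ideal.map_comap_le fun a haJ => by_contra fun haK => ?_
    obtain ⟨b, hb, hbK, hbfix⟩ := hG.exists_smul_sub_mem_of_notMem hp K.toAddSubgroup
      (fun g _ => smul_mem_map_val g) haK
    have hbJ : b ∈ J :=
      (AddSubgroup.closure_le J.toAddSubgroup).mpr (by rintro _ ⟨g, rfl⟩; exact hJ g a haJ) hb
    have htr : invariantTrace k G A (c * b) ∈ J.comap (invariantSubalgebra k G A).val :=
      J.sum_mem fun g _ => hJ g _ (J.mul_mem_left c hbJ)
    exact hbK (mem_of_sum_smul_mul_mem_of_smul_sub_mem hc (Ideal.mem_map_of_mem _ htr) hbfix)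
end

section
/- Let k be a field of characteristic p > 0 and G a finite p-group acting on a commutative k-algebra A by algebra automorphisms. If A is trace-surjective (tr(A) = A^G), then for every prime ideal P of A the inertia group T_P = {g ∈ Stab_G(P) : g acts trivially on A/P} is trivial. -/
/-!
Suppose `g ≠ 1` acts trivially on `A ⧸ P`. Then so does the cyclic group `H = ⟨g⟩`, whose order
is divisible by `p`. Splitting the trace over the cosets of `H`, each coset contributes `|H|`
copies of one element modulo `P`, so `tr(A) ⊆ P`. But trace-surjectivity gives `1 = tr(x)`
for some `x`, so `1 ∈ P`.
-/

open Finset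

theorem Subgroup.sum_eq_card_nsmul_sum_quotient {G M : Type*} [Group G] [Fintype G]
    [AddCommMonoid M] (H : Subgroup G) [Fintype (G ⧸ H)] (φ : G → M)
    (hφ : ∀ a b : G, (a : G ⧸ H) = b → φ a = φ b) :
    ∑ γ, φ γ = Nat.card H • ∑ q : G ⧸ H, φ q.out := by
  classical
  let e : G ≃ (G ⧸ H) × H := groupEquivQuotientProdSubgroup
  calc ∑ γ, φ γ = ∑ r : (G ⧸ H) × H, φ r.1.out :=
        Fintype.sum_equiv e _ _ fun γ => hφ _ _ (by rw [QuotientGroup.out_eq']; rfl)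
    _ = Nat.card H • ∑ q : G ⧸ H, φ q.out := by
        rw [Fintype.sum_prod_type, smul_sum]
        simp only [sum_const, card_univ, Nat.card_eq_fintype_card]

theorem Ideal.sum_smul_mem_of_le_inertia {G A : Type*} [Group G] [Fintype G] [CommRing A]
    [MulAction G A] (I : Ideal A) {H : Subgroup G} (hH : H ≤ I.toAddSubgroup.inertia G)
    (hcard : (Nat.card H : A) ∈ I) (x : A) :
    ∑ γ : G, γ • x ∈ I := by
  classical
  have hinv : ∑ γ : G, γ • x = ∑ γ : G, γ⁻¹ • x :=
    (Fintype.sum_equiv (Equiv.inv G) _ _ fun γ => by simp).symm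
  have hconst : ∀ a b : G, (a : G ⧸ H) = b →
      Ideal.Quotient.mk I (a⁻¹ • x) = Ideal.Quotient.mk I (b⁻¹ • x) := by
    intro a b hab
    have hmem : (a⁻¹ * b)⁻¹ ∈ H := H.inv_mem (QuotientGroup.eq.mp hab)
    rw [Ideal.Quotient.eq, ← sub_mem_comm_iff (a := b⁻¹ • x),
      show b⁻¹ = (a⁻¹ * b)⁻¹ * a⁻¹ by group, mul_smul]
    exact hH hmem _
  rw [← Ideal.Quotient.eq_zero_iff_mem, hinv, map_sum,
    Subgroup.sum_eq_card_nsmul_sum_quotient H _ hconst, nsmul_eq_mul,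
    ← map_natCast (Ideal.Quotient.mk I), Ideal.Quotient.eq_zero_iff_mem.mpr hcard, zero_mul]

theorem inertia_group_trivial_general
    {p : ℕ} [Fact p.Prime] (k : Type*) [Field k] [CharP k p]
    (G : Type*) [Group G] [Fintype G] (hG : IsPGroup p G)
    (A : Type*) [CommRing A] [Algebra k A] [MulSemiringAction G A]
    (hts : ∀ b : A, (∀ g : G, g • b = b) → ∃ x : A, (∑ g : G, g • x) = b)
    (P : Ideal A) (hP : P.IsPrime)
    (g : G) (hg : ∀ a : A, g • a - a ∈ P) :
    g = 1 := by
  by_contra hne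
  have hp : (p : A) = 0 := by
    rw [← map_natCast (algebraMap k A), CharP.cast_eq_zero, map_zero]
  have hcard : (Nat.card (Subgroup.zpowers g) : A) ∈ P := by
    obtain ⟨m, hm⟩ := hG.dvd_orderOf hne
    rw [Nat.card_zpowers, hm, Nat.cast_mul, hp, zero_mul]
    exact P.zero_mem
  obtain ⟨x, hx⟩ := hts 1 smul_one
  have hone : (1 : A) ∈ P :=
    hx ▸ P.sum_smul_mem_of_le_inertia (Subgroup.zpowers_le.mpr hg) hcard x
  exact hP.ne_top ((Ideal.eq_top_iff_one P).mpr hone)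

/-- If `A` is a trace-surjective commutative `G`-algebra (`G` a finite
`p`-group, `char k = p`), then for every prime ideal `P` of `A` the inertia group is
trivial: any `g ∈ G` acting trivially on `A/P` (i.e. with `g • a - a ∈ P` for all `a`,
which in particular forces `g` to stabilize `P`) must be the identity. -/
theorem inertia_group_trivial
    {p : ℕ} [Fact p.Prime] (k : Type*) [Field k] [CharP k p]
    (G : Type*) [Group G] [Fintype G] (hG : IsPGroup p G)
    (A : Type*) [CommRing A] [Algebra k A] [MulSemiringAction G A] [SMulCommClass G k A]
    (hts : ∀ b : A, (∀ g : G, g • b = b) → ∃ x : A, (∑ g : G, g • x) = b)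
    (P : Ideal A) (hP : P.IsPrime)
    (g : G) (hg : ∀ a : A, g • a - a ∈ P) :
    g = 1 :=
  inertia_group_trivial_general k G hG A hts P hP g hg
end

section
/- Let G be a finite p-group of order p^n, k = F_p the field with p elements, and D_k = Sym_k(kG)/(−1 + Σ_{g∈G} X_g) the dehomogenized symmetric algebra with its G-action. If A = k[a_1, …, a_m] ≤ D_k is a trace-surjective G-subalgebra generated by m elements, then m ≥ n. -/
/-!
Since `x 1 = 1 - ∑_{g ≠ 1} x g`, `D` is a polynomial ring over `k = 𝔽_p`, so it has a `k`-point
`χ : D → k`. Suppose `u ≠ 1` fixes `χ` on `A`, i.e. `χ (u • b) = χ b` for `b ∈ A`. All such `u`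
form a nontrivial subgroup `H` of the `p`-group `G`, so `p ∣ |H|`. For `w ∈ A` with trace `1`,
the function `c ↦ χ (c⁻¹ • w)` is constant on the cosets `cH`, hence
`1 = ∑_c χ (c • w) = |H| • (…) = 0` in `k`. So the `G`-orbit of `χ` restricted to `A` is free:
`g ↦ (χ (g⁻¹ • a i))_i` is injective from `G` into `k^m`, and `p ^ n ≤ p ^ m`.
-/

open Finset

theorem QuotientGroup.sum_comp_mk {G M : Type*} [Group G] [Fintype G] [AddCommMonoid M]
    (H : Subgroup G) [Fintype (G ⧸ H)] [DecidableEq (G ⧸ H)] (f : G ⧸ H → M) :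
    ∑ g : G, f g = Nat.card H • ∑ q : G ⧸ H, f q := by
  have hfiber (q : G ⧸ H) : #{g : G | (g : G ⧸ H) = q} = Nat.card H := by
    have := QuotientGroup.card_preimage_mk H {q}
    rw [Nat.card_unique (α := ({q} : Set (G ⧸ H))), mul_one] at this
    rw [← this, ← Nat.card_eq_finsetCard]
    exact Nat.card_congr (Equiv.subtypeEquivRight fun g => by simp)
  rw [← Finset.sum_fiberwise' univ (fun g : G => (g : G ⧸ H)) f, Finset.smul_sum]
  exact Fintype.sum_congr _ _ fun q => by rw [sum_const, hfiber]

section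

variable {G D : Type*} [Group G]

def stabilizerOn {R : Type*} [MulAction G D] (A : Set D) (hA : ∀ g : G, ∀ b ∈ A, g • b ∈ A)
    (χ : D → R) : Subgroup G where
  carrier := {u | ∀ b ∈ A, χ (u • b) = χ b}
  one_mem' b _ := by rw [one_smul]
  mul_mem' hu hv b hb := by rw [mul_smul, hu _ (hA _ b hb), hv b hb]
  inv_mem' {u} hu b hb := by rw [← hu _ (hA _ b hb), smul_inv_smul]

theorem stabilizerOn_eq_bot_of_sum_smul_eq_one {p : ℕ} [Fact p.Prime] [Fintype G]
    (hG : IsPGroup p G) {R : Type*} [Semiring D] [MulSemiringAction G D] [Semiring R] [CharP R p]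
    {A : Set D} (hA : ∀ g : G, ∀ b ∈ A, g • b ∈ A) (χ : D →+* R) {w : D} (hwA : w ∈ A)
    (hw : ∑ g : G, g • w = 1) : stabilizerOn A hA χ = ⊥ := by
  classical
  set H := stabilizerOn A hA χ
  by_contra hne
  have hdvd : p ∣ Nat.card H :=
    (hG.to_subgroup H).card_eq_or_dvd.resolve_left (Subgroup.card_eq_one.not.mpr hne)
  let f : G ⧸ H → R := Quotient.lift (fun g => χ (g⁻¹ • w)) fun a b hab => by
    have hmem : b⁻¹ * a ∈ H := H.inv_mem_iff.mp (by simpa using QuotientGroup.leftRel_apply.mp hab)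
    change χ (a⁻¹ • w) = χ (b⁻¹ • w)
    rw [← hmem _ (hA _ w hwA), smul_smul, mul_inv_cancel_right]
  have hsum : ∑ g : G, χ (g • w) = ∑ g : G, f g :=
    Fintype.sum_equiv (Equiv.inv G) _ _ fun g => by
      change _ = χ (g⁻¹⁻¹ • w)
      rw [inv_inv]
  have : Nontrivial R := CharP.nontrivial_of_char_ne_one (Fact.out : p.Prime).ne_one
  apply one_ne_zero (α := R)
  calc 1 = χ (∑ g : G, g • w) := by rw [hw, map_one]
    _ = ∑ g : G, f g := by rw [map_sum, hsum]
    _ = 0 := by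
      rw [QuotientGroup.sum_comp_mk, nsmul_eq_mul, (CharP.cast_eq_zero_iff R p _).mpr hdvd,
        zero_mul]

theorem injective_of_stabilizerOn_eq_bot {k R ι : Type*} [CommSemiring k] [Semiring D]
    [Algebra k D] [Semiring R] [Algebra k R] [MulSemiringAction G D] [SMulCommClass G k D]
    (a : ι → D) (hA : ∀ g : G, ∀ b ∈ Algebra.adjoin k (Set.range a),
      g • b ∈ Algebra.adjoin k (Set.range a))
    (χ : D →ₐ[k] R) (h : stabilizerOn (Algebra.adjoin k (Set.range a) : Set D) hA χ = ⊥) :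
    Function.Injective fun (g : G) (i : ι) => χ (g⁻¹ • a i) := by
  intro g₁ g₂ hg
  have heq : Set.EqOn (χ.comp (MulSemiringAction.toAlgHom k D g₁⁻¹))
      (χ.comp (MulSemiringAction.toAlgHom k D g₂⁻¹)) (Algebra.adjoin k (Set.range a)) := by
    rw [AlgHom.eqOn_adjoin_iff]
    rintro _ ⟨i, rfl⟩
    exact congrFun hg i
  have hmem : g₁⁻¹ * g₂ ∈ stabilizerOn (Algebra.adjoin k (Set.range a) : Set D) hA χ :=
    fun b hb => by simpa [mul_smul] using heq (hA g₂ b hb)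
  rw [h, Subgroup.mem_bot, inv_mul_eq_one] at hmem
  exact hmem

end

theorem Algebra.adjoin_range_subtype_ne_eq {k D ι : Type*} [CommRing k] [Ring D] [Algebra k D]
    [Fintype ι] [DecidableEq ι] (x : ι → D) (hsum : ∑ i, x i = 1) (j : ι) :
    adjoin k (Set.range fun i : {i // i ≠ j} => x i) = adjoin k (Set.range x) := by
  refine le_antisymm (adjoin_mono (Set.range_comp_subset_range _ x)) (adjoin_le ?_)
  rintro _ ⟨i, rfl⟩
  by_cases hij : i = j
  · subst hij
    rw [Fintype.sum_eq_add_sum_subtype_ne _ i] at hsum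
    rw [eq_sub_of_add_eq hsum]
    exact sub_mem (one_mem _) (sum_mem fun i _ => subset_adjoin ⟨i, rfl⟩)
  · exact subset_adjoin ⟨⟨i, hij⟩, rfl⟩

theorem AlgebraicIndependent.nonempty_algHom_of_adjoin_eq_top {k D ι : Type*} [CommRing k]
    [CommRing D] [Algebra k D] {x : ι → D} (hx : AlgebraicIndependent k x)
    (htop : Algebra.adjoin k (Set.range x) = ⊤) : Nonempty (D →ₐ[k] k) :=
  ⟨(MvPolynomial.aeval 0).comp <| hx.aevalEquiv.symm.toAlgHom.comp <|
    (Subalgebra.equivOfEq ⊤ _ htop.symm).toAlgHom.comp Subalgebra.topEquiv.symm.toAlgHom⟩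

theorem generators_lower_bound_general
    {p n m : ℕ} [Fact p.Prime]
    (G : Type*) [Group G] [Fintype G] (hcard : Fintype.card G = p ^ n)
    (D : Type*) [CommRing D] [Algebra (ZMod p) D] [MulSemiringAction G D]
    [SMulCommClass G (ZMod p) D]
    (x : G → D)
    (hsum : (∑ g : G, x g) = 1)
    (hgen : Algebra.adjoin (ZMod p) (Set.range x) = ⊤)
    (hind : AlgebraicIndependent (ZMod p) (fun g : {g : G // g ≠ 1} => x g.val))
    (a : Fin m → D)
    (hAst : ∀ (g : G), ∀ b ∈ Algebra.adjoin (ZMod p) (Set.range a),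
        g • b ∈ Algebra.adjoin (ZMod p) (Set.range a))
    (hAts : ∃ w ∈ Algebra.adjoin (ZMod p) (Set.range a), (∑ g : G, g • w) = 1) :
    n ≤ m := by
  classical
  obtain ⟨χ⟩ := hind.nonempty_algHom_of_adjoin_eq_top
    ((Algebra.adjoin_range_subtype_ne_eq x hsum 1).trans hgen)
  obtain ⟨w, hwA, hw⟩ := hAts
  have hG : IsPGroup p G := IsPGroup.of_card (by rw [Nat.card_eq_fintype_card, hcard])
  have hinj := injective_of_stabilizerOn_eq_bot a hAst χ
    (stabilizerOn_eq_bot_of_sum_smul_eq_one hG hAst χ.toRingHom hwA hw)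
  have hle := Fintype.card_le_of_injective _ hinj
  rw [hcard, Fintype.card_fun, ZMod.card, Fintype.card_fin] at hle
  exact (Nat.pow_le_pow_iff_right (Fact.out : p.Prime).one_lt).mp hle

/-- Let `G` be a finite `p`-group of order `p^n`, `k = F_p = ZMod p`, and let
`D = D_k = Sym_k(kG)/(-1 + Σ_g X_g)` be the dehomogenized symmetric algebra, presented
abstractly via its defining properties (elements `x : G → D` permuted regularly by `G`,
summing to `1`, generating `D`, algebraically independent away from `1`).  If
`A = k[a_1, …, a_m] ≤ D` is a `G`-stable trace-surjective subalgebra generated by `m`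
elements, then `m ≥ n`. -/
theorem generators_lower_bound
    {p n m : ℕ} [Fact p.Prime]
    (G : Type*) [Group G] [Fintype G] (hcard : Fintype.card G = p ^ n)
    (D : Type*) [CommRing D] [Algebra (ZMod p) D] [MulSemiringAction G D]
    [SMulCommClass G (ZMod p) D]
    (x : G → D)
    (hsum : (∑ g : G, x g) = 1)
    (hact : ∀ g h : G, g • x h = x (g * h))
    (hgen : Algebra.adjoin (ZMod p) (Set.range x) = ⊤)
    (hind : AlgebraicIndependent (ZMod p) (fun g : {g : G // g ≠ 1} => x g.val))
    (a : Fin m → D)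
    (hAst : ∀ (g : G), ∀ b ∈ Algebra.adjoin (ZMod p) (Set.range a),
        g • b ∈ Algebra.adjoin (ZMod p) (Set.range a))
    (hAts : ∃ w ∈ Algebra.adjoin (ZMod p) (Set.range a), (∑ g : G, g • w) = 1) :
    n ≤ m :=
  generators_lower_bound_general G hcard D x hsum hgen hind a hAst hAts
end

section
/- Let R be a commutative ring, and θ : R → A, φ : R → B ring homomorphisms of commutative rings. Set Ā = A/θ(ker φ)A, B̄ = B/φ(ker θ)B, and R̄ = R/(ker θ + ker φ). Then there is a canonical isomorphism of rings A ⊗_R B ≅ Ā ⊗_{R̄} B̄. -/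
/-!
Since `θ r ⊗ 1 = 1 ⊗ φ r` in `A ⊗_R B`, the ideals `θ(ker φ)A` and `φ(ker θ)B` die in the tensor
product, so `A ⊗_R B ≅ Ā ⊗_R B̄`. The `R`-actions on `Ā` and `B̄` factor through the quotient `R̄`
of `R`, and for such modules tensoring over `R` or over `R̄` is the same.
-/

open TensorProduct

theorem AlgHom.ker_algebraMap_le {R A C : Type*} [CommRing R] [CommRing A] [CommRing C]
    [Algebra R A] [Algebra R C] (f : A →ₐ[R] C) :
    RingHom.ker (algebraMap R A) ≤ RingHom.ker (algebraMap R C) := fun r hr => by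
  rw [RingHom.mem_ker, ← f.commutes, RingHom.mem_ker.1 hr, map_zero]

theorem Ideal.map_eq_bot_of_le_map_ker_algebraMap {R A B C : Type*} [CommRing R] [CommRing A]
    [CommRing B] [CommRing C] [Algebra R A] [Algebra R B] [Algebra R C]
    (f : A →ₐ[R] C) (g : B →ₐ[R] C) {I : Ideal A}
    (hI : I ≤ (RingHom.ker (algebraMap R B)).map (algebraMap R A)) : I.map f = ⊥ := by
  refine eq_bot_mono (Ideal.map_mono hI) ?_
  rw [Ideal.map_eq_bot_iff_le_ker, Ideal.map_le_iff_le_comap]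
  intro r hr
  rw [Ideal.mem_comap, RingHom.mem_ker, AlgHom.commutes]
  exact g.ker_algebraMap_le hr

namespace Algebra.TensorProduct

variable {R A B : Type*} [CommRing R] [CommRing A] [CommRing B] [Algebra R A] [Algebra R B]

noncomputable def tensorQuotientEquivOfMapEqBot (J : Ideal B)
    (hJ : J.map (includeRight : B →ₐ[R] A ⊗[R] B) = ⊥) : A ⊗[R] (B ⧸ J) ≃ₐ[R] A ⊗[R] B :=
  (tensorQuotientEquiv R B A J).trans
    ((Ideal.quotientEquivAlgOfEq R hJ).trans (AlgEquiv.quotientBot R _))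

noncomputable def quotientTensorEquivOfMapEqBot (I : Ideal A)
    (hI : I.map (includeLeft : A →ₐ[R] A ⊗[R] B) = ⊥) : (A ⧸ I) ⊗[R] B ≃ₐ[R] A ⊗[R] B :=
  (quotientTensorEquiv R B A I).trans
    ((Ideal.quotientEquivAlgOfEq R hI).trans (AlgEquiv.quotientBot R _))

variable {I : Ideal A} {J : Ideal B}

noncomputable def equivQuotientTensorQuotient
    (hI : I ≤ (RingHom.ker (algebraMap R B)).map (algebraMap R A))
    (hJ : J ≤ (RingHom.ker (algebraMap R A)).map (algebraMap R B)) :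
    A ⊗[R] B ≃ₐ[R] (A ⧸ I) ⊗[R] (B ⧸ J) :=
  let e₁ : A ⊗[R] (B ⧸ J) ≃ₐ[R] A ⊗[R] B := tensorQuotientEquivOfMapEqBot J
      (Ideal.map_eq_bot_of_le_map_ker_algebraMap (C := A ⊗[R] B) includeRight includeLeft hJ)
  let e₂ : (A ⧸ I) ⊗[R] (B ⧸ J) ≃ₐ[R] A ⊗[R] (B ⧸ J) := quotientTensorEquivOfMapEqBot I
      (Ideal.map_eq_bot_of_le_map_ker_algebraMap (C := A ⊗[R] (B ⧸ J)) includeLeft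
        (includeRight.comp (Ideal.Quotient.mkₐ R J)) hI)
  e₁.symm.trans e₂.symm

variable {S : Type*} [CommRing S] [Algebra R S]
    [Algebra S (A ⧸ I)] [Algebra S (B ⧸ J)]
    [IsScalarTower R S (A ⧸ I)] [IsScalarTower R S (B ⧸ J)]

noncomputable def equivQuotientTensorQuotientOfSurjective
    (hS : Function.Surjective (algebraMap R S))
    (hI : I ≤ (RingHom.ker (algebraMap R B)).map (algebraMap R A))
    (hJ : J ≤ (RingHom.ker (algebraMap R A)).map (algebraMap R B)) :
    A ⊗[R] B ≃ₐ[R] (A ⧸ I) ⊗[S] (B ⧸ J) :=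
  haveI := CompatibleSMul.of_algebraMap_surjective (M := A ⧸ I) (N := B ⧸ J) hS
  (equivQuotientTensorQuotient hI hJ).trans (equivOfCompatibleSMul R S R _ _).symm

end Algebra.TensorProduct

/-- Let `θ : R → A` and `φ : R → B` be homomorphisms of commutative rings.
With `Ā = A/θ(ker φ)A`, `B̄ = B/φ(ker θ)B` and `R̄ = R/(ker θ + ker φ)`, there is a
canonical ring isomorphism `A ⊗_R B ≅ Ā ⊗_{R̄} B̄`. -/
theorem tensor_quotient_ring_iso
    (R A B : Type*) [CommRing R] [CommRing A] [CommRing B]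
    (θ : R →+* A) (φ : R →+* B) :
    letI : Algebra R A := θ.toAlgebra
    letI : Algebra R B := φ.toAlgebra
    letI : Algebra (R ⧸ (RingHom.ker θ ⊔ RingHom.ker φ))
        (A ⧸ Ideal.map θ (RingHom.ker φ)) :=
      (Ideal.quotientMap (I := RingHom.ker θ ⊔ RingHom.ker φ)
        (Ideal.map θ (RingHom.ker φ)) θ
        (by
          refine sup_le ?_ Ideal.le_comap_map
          intro r hr
          have h0 : θ r = 0 := RingHom.mem_ker.mp hr
          simp [Ideal.mem_comap, h0])).toAlgebra
    letI : Algebra (R ⧸ (RingHom.ker θ ⊔ RingHom.ker φ))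
        (B ⧸ Ideal.map φ (RingHom.ker θ)) :=
      (Ideal.quotientMap (I := RingHom.ker θ ⊔ RingHom.ker φ)
        (Ideal.map φ (RingHom.ker θ)) φ
        (by
          refine sup_le Ideal.le_comap_map ?_
          intro r hr
          have h0 : φ r = 0 := RingHom.mem_ker.mp hr
          simp [Ideal.mem_comap, h0])).toAlgebra
    Nonempty ((A ⊗[R] B) ≃+*
      ((A ⧸ Ideal.map θ (RingHom.ker φ)) ⊗[R ⧸ (RingHom.ker θ ⊔ RingHom.ker φ)]
        (B ⧸ Ideal.map φ (RingHom.ker θ)))) := by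
  let : Algebra R A := θ.toAlgebra
  let : Algebra R B := φ.toAlgebra
  let := (Ideal.quotientMap (I := RingHom.ker θ ⊔ RingHom.ker φ) _ θ
    (sup_le (Ideal.comap_mono bot_le) Ideal.le_comap_map)).toAlgebra
  let := (Ideal.quotientMap (I := RingHom.ker θ ⊔ RingHom.ker φ) _ φ
    (sup_le Ideal.le_comap_map (Ideal.comap_mono bot_le))).toAlgebra
  have : IsScalarTower R (R ⧸ (RingHom.ker θ ⊔ RingHom.ker φ))
      (A ⧸ Ideal.map θ (RingHom.ker φ)) :=
    .of_algebraMap_eq fun _ => rfl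
  have : IsScalarTower R (R ⧸ (RingHom.ker θ ⊔ RingHom.ker φ))
      (B ⧸ Ideal.map φ (RingHom.ker θ)) :=
    .of_algebraMap_eq fun _ => rfl
  exact ⟨(Algebra.TensorProduct.equivQuotientTensorQuotientOfSurjective
    Ideal.Quotient.mk_surjective le_rfl le_rfl).toRingEquiv⟩
end
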